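/- arXiv:quant-ph/0501126 — 4 statements merged into one kernel-verified Lean document; each statement's English description precedes it below -/
import Mathlib

section
/- Let q be a prime power, m a positive integer with m ≠ 2, n = q^{2m} − 1, and let δ be an integer with 2 ≤ δ ≤ q^{m + [m is even]} − 1 − (q^2 − 2)·[m is even]. Then there exists a linear code C ⊆ F_{q^2}^n with dim C = q^{2m} − 1 − m·⌈(δ−1)(1−1/q^2)⌉, minimum distance at least δ, and C^{⊥h} ⊆ C. -/
set_option linter.unusedSectionVars false
set_option linter.unusedVariables false
set_option maxHeartbeats 1600000

open Finset Polynomial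

namespace HermAux

section LinAlg

variable {K : Type*} [Field K] [Fintype K] [DecidableEq K] {N : ℕ}

/-- Euclidean dual of a submodule of `K^N`. -/
def eucDual (S : Submodule K (Fin N → K)) : Submodule K (Fin N → K) where
  carrier := {y | ∀ x ∈ S, ∑ j, y j * x j = 0}
  add_mem' := by
    intro a b ha hb x hx
    simp only [Set.mem_setOf_eq] at *
    simp [add_mul, Finset.sum_add_distrib, ha x hx, hb x hx]
  zero_mem' := by simp
  smul_mem' := by
    intro c y hy x hx
    simp only [Set.mem_setOf_eq] at *
    simp [smul_eq_mul, mul_assoc, ← Finset.mul_sum, hy x hx]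

lemma mem_eucDual {S : Submodule K (Fin N → K)} {y} :
    y ∈ eucDual S ↔ ∀ x ∈ S, ∑ j, y j * x j = 0 := Iff.rfl

noncomputable def dotL (S : Submodule K (Fin N → K)) :
    (Fin N → K) →ₗ[K] Module.Dual K S where
  toFun y :=
    { toFun := fun x => ∑ j, y j * (x : Fin N → K) j
      map_add' := by
        intro x z
        simp [mul_add, Finset.sum_add_distrib]
      map_smul' := by
        intro c x
        simp only [Submodule.coe_smul, Pi.smul_apply, smul_eq_mul, RingHom.id_apply,
          Finset.mul_sum]
        congr 1; ext j; ring }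
  map_add' := by
    intro y z; ext x
    simp [add_mul, Finset.sum_add_distrib]
  map_smul' := by
    intro c y; ext x
    simp only [LinearMap.coe_mk, AddHom.coe_mk, RingHom.id_apply, LinearMap.smul_apply,
      smul_eq_mul, Finset.mul_sum]
    congr 1; ext j; dsimp; ring

lemma ker_dotL (S : Submodule K (Fin N → K)) : LinearMap.ker (dotL S) = eucDual S := by
  ext y
  constructor
  · intro hy x hx
    have := congrArg (fun f => f ⟨x, hx⟩) (LinearMap.mem_ker.mp hy)
    simpa [dotL] using this
  · intro hy
    rw [LinearMap.mem_ker]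
    ext x
    exact hy x.1 x.2

lemma surjective_dotL (S : Submodule K (Fin N → K)) : Function.Surjective (dotL S) := by
  intro g
  obtain ⟨T, hT⟩ := Submodule.exists_isCompl S
  set f : (Fin N → K) →ₗ[K] K := g ∘ₗ (S.projectionOnto T hT)
  refine ⟨fun j => f (Pi.single j 1), ?_⟩
  ext x
  have hx : ∑ j, f (Pi.single j 1) * (x : Fin N → K) j = f x := by
    have : (x : Fin N → K) = ∑ j, (x : Fin N → K) j • (Pi.single j (1 : K) : Fin N → K) := by
      ext i
      simp [Pi.single_apply]
    conv_rhs => rw [this]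
    rw [map_sum]
    congr 1; ext j
    rw [map_smul]
    simp [mul_comm]
  have hfx : f x = g x := by
    simp only [f, LinearMap.comp_apply]
    rw [Submodule.projectionOnto_apply_left]
  simp only [dotL, LinearMap.coe_mk, AddHom.coe_mk]
  rw [hx, hfx]

lemma finrank_eucDual (S : Submodule K (Fin N → K)) :
    Module.finrank K (eucDual S) = N - Module.finrank K S := by
  have h1 := LinearMap.finrank_range_add_finrank_ker (dotL S)
  rw [ker_dotL, LinearMap.range_eq_top.mpr (surjective_dotL S)] at h1
  rw [finrank_top, Subspace.dual_finrank_eq, Module.finrank_pi] at h1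
  simp only [Fintype.card_fin] at h1
  omega


variable (φ : K →+* K)

/-- The Hermitian dual of a submodule, as a submodule. -/
def hermDual (S : Submodule K (Fin N → K)) : Submodule K (Fin N → K) where
  carrier := {y | ∀ x ∈ S, ∑ j, φ (y j) * x j = 0}
  add_mem' := by
    intro a b ha hb x hx
    simp only [Set.mem_setOf_eq] at *
    simp only [Pi.add_apply, map_add, add_mul, Finset.sum_add_distrib, ha x hx, hb x hx,
      add_zero]
  zero_mem' := by
    intro x hx
    simp
  smul_mem' := by
    intro c y hy x hx
    simp only [Set.mem_setOf_eq] at *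
    simp only [Pi.smul_apply, smul_eq_mul, map_mul, mul_assoc, ← Finset.mul_sum, hy x hx,
      mul_zero]

lemma mem_hermDual {S : Submodule K (Fin N → K)} {y} :
    y ∈ hermDual φ S ↔ ∀ x ∈ S, ∑ j, φ (y j) * x j = 0 := Iff.rfl

lemma finrank_hermDual (S : Submodule K (Fin N → K)) :
    Module.finrank K (hermDual φ S) = N - Module.finrank K S := by
  classical
  have hbij : Function.Bijective φ :=
    (Finite.injective_iff_bijective).mp φ.injective
  let ψ : (Fin N → K) ≃ (Fin N → K) :=
    Equiv.piCongrRight fun _ => Equiv.ofBijective _ hbij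
  have hiff : ∀ y, y ∈ hermDual φ S ↔ ψ y ∈ eucDual S := by
    intro y
    rw [mem_hermDual, mem_eucDual]
    exact Iff.rfl
  let e : (hermDual φ S) ≃ (eucDual S) := Equiv.subtypeEquiv ψ hiff
  have hcard : Fintype.card (hermDual φ S) = Fintype.card (eucDual S) :=
    Fintype.card_congr e
  have h1 : Fintype.card K ^ Module.finrank K (hermDual φ S)
      = Fintype.card K ^ Module.finrank K (eucDual S) := by
    rw [← Module.card_eq_pow_finrank (K := K), ← Module.card_eq_pow_finrank (K := K), hcard]
  have h2 : Module.finrank K (hermDual φ S) = Module.finrank K (eucDual S) :=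
    Nat.pow_right_injective Fintype.one_lt_card h1
  rw [h2, finrank_eucDual]

variable (hφ2 : ∀ x, φ (φ x) = x)

include hφ2 in
lemma le_hermDual_hermDual (S : Submodule K (Fin N → K)) :
    S ≤ hermDual φ (hermDual φ S) := by
  intro x hx y hy
  have h0 : ∑ j, φ (y j) * x j = 0 := hy x hx
  have h1 := congrArg φ h0
  rw [map_zero, map_sum] at h1
  calc ∑ j, φ (x j) * y j = ∑ j, φ (φ (y j) * x j) := by
        refine Finset.sum_congr rfl fun j _ => ?_
        rw [map_mul, hφ2, mul_comm]
      _ = 0 := h1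

lemma hermDual_antitone {S T : Submodule K (Fin N → K)} (h : S ≤ T) :
    hermDual φ T ≤ hermDual φ S := fun y hy x hx => hy x (h hx)

include hφ2 in
lemma hermDual_hermDual (S : Submodule K (Fin N → K)) :
    hermDual φ (hermDual φ S) = S := by
  have hle := le_hermDual_hermDual φ hφ2 S
  have h1 : Module.finrank K (hermDual φ (hermDual φ S)) = Module.finrank K S := by
    rw [finrank_hermDual, finrank_hermDual]
    have := Submodule.finrank_le S
    rw [Module.finrank_pi] at this
    simp only [Fintype.card_fin] at this
    omega
  exact (Submodule.eq_of_le_of_finrank_le hle (le_of_eq h1)).symm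

lemma finrank_le_pi (S : Submodule K (Fin N → K)) : Module.finrank K S ≤ N := by
  have := Submodule.finrank_le S
  rwa [Module.finrank_pi, Fintype.card_fin] at this


/-- The Hermitian inner product. -/
def herm (y x : Fin N → K) : K := ∑ j, φ (y j) * x j

lemma herm_add_right (y x x' : Fin N → K) :
    herm φ y (x + x') = herm φ y x + herm φ y x' := by
  simp [herm, mul_add, Finset.sum_add_distrib]

lemma herm_smul_right (c : K) (y x : Fin N → K) :
    herm φ y (c • x) = c * herm φ y x := by
  simp only [herm, Pi.smul_apply, smul_eq_mul, Finset.mul_sum]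
  refine Finset.sum_congr rfl fun j _ => by ring

lemma herm_add_left (y y' x : Fin N → K) :
    herm φ (y + y') x = herm φ y x + herm φ y' x := by
  simp [herm, add_mul, Finset.sum_add_distrib]

lemma herm_smul_left (c : K) (y x : Fin N → K) :
    herm φ (c • y) x = φ c * herm φ y x := by
  simp only [herm, Pi.smul_apply, smul_eq_mul, map_mul, Finset.mul_sum]
  refine Finset.sum_congr rfl fun j _ => by ring

variable (hφ2 : ∀ x, φ (φ x) = x)

include hφ2 in
lemma herm_conj (y x : Fin N → K) : φ (herm φ y x) = herm φ x y := by
  rw [herm, map_sum]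
  refine Finset.sum_congr rfl fun j _ => ?_
  rw [map_mul, hφ2, mul_comm]

lemma mem_hermDual' {S : Submodule K (Fin N → K)} {y} :
    y ∈ hermDual φ S ↔ ∀ x ∈ S, herm φ y x = 0 := mem_hermDual φ

include hφ2 in
lemma mem_hermDual_sup {D : Submodule K (Fin N → K)} {v y : Fin N → K} :
    y ∈ hermDual φ (D ⊔ Submodule.span K {v}) ↔
      y ∈ hermDual φ D ∧ herm φ y v = 0 := by
  rw [mem_hermDual' φ, mem_hermDual' φ]
  constructor
  · intro h
    refine ⟨fun x hx => h x (Submodule.mem_sup_left hx), h v ?_⟩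
    exact Submodule.mem_sup_right (Submodule.mem_span_singleton_self v)
  · rintro ⟨h1, h2⟩ x hx
    obtain ⟨d, hd, w, hw, rfl⟩ := Submodule.mem_sup.mp hx
    obtain ⟨c, rfl⟩ := Submodule.mem_span_singleton.mp hw
    rw [herm_add_right, herm_smul_right, h1 d hd, h2, mul_zero, add_zero]

lemma finrank_sup_span_singleton {D : Submodule K (Fin N → K)} {v : Fin N → K}
    (hv : v ∉ D) :
    Module.finrank K ↥(D ⊔ Submodule.span K {v}) = Module.finrank K D + 1 := by
  classical
  have hv0 : v ≠ 0 := fun h => hv (h ▸ D.zero_mem)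
  have hinf : D ⊓ Submodule.span K {v} = ⊥ := by
    rw [Submodule.eq_bot_iff]
    rintro x ⟨hxD, hxs⟩
    obtain ⟨c, rfl⟩ := Submodule.mem_span_singleton.mp hxs
    rcases eq_or_ne c 0 with rfl | hc
    · simp
    · refine absurd ?_ hv
      have := D.smul_mem c⁻¹ hxD
      rwa [smul_smul, inv_mul_cancel₀ hc, one_smul] at this
  have := Submodule.finrank_sup_add_finrank_inf_eq D (Submodule.span K {v})
  rw [hinf, finrank_span_singleton hv0] at this
  simpa using this

/-- Norms are surjective onto the fixed subfield. -/
lemma exists_norm_eq {q : ℕ} (hcard : Fintype.card K = q ^ 2) (hq : 2 ≤ q)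
    (a : K) (ha : a ≠ 0) (haq : a ^ q = a) : ∃ c : K, c ^ (q + 1) = a := by
  obtain ⟨g, hg⟩ := IsCyclic.exists_monoid_generator (α := Kˣ)
  have hog : orderOf g = q ^ 2 - 1 := by
    rw [orderOf_eq_card_of_forall_mem_zpowers, Nat.card_eq_fintype_card,
      Fintype.card_units, hcard]
    intro x
    obtain ⟨s, hs⟩ := hg x
    exact ⟨s, by exact_mod_cast hs⟩
  set au : Kˣ := Units.mk0 a ha
  obtain ⟨s, hs⟩ := hg au
  simp only at hs
  have haq' : au ^ (q - 1) = 1 := by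
    have h1 : au ^ q = au := by
      ext; push_cast [au]; exact haq
    have h2 : au ^ (q - 1) * au = au := by
      rw [← pow_succ]
      have : q - 1 + 1 = q := by omega
      rw [this, h1]
    exact mul_right_cancel (by rw [h2, one_mul])
  have hdvd : (q ^ 2 - 1) ∣ s * (q - 1) := by
    rw [← hog]
    apply orderOf_dvd_of_pow_eq_one
    rw [pow_mul, hs]
    exact haq'
  have hfac : q ^ 2 - 1 = (q + 1) * (q - 1) := by
    have : (q + 1) * (q - 1) = q * q - 1 := by
      cases' q with q'
      · omega
      · simp [Nat.succ_sub_one]; ring_nf; omega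
    rw [this, ← pow_two]
  have hdvd2 : (q + 1) ∣ s := by
    rw [hfac] at hdvd
    exact (Nat.mul_dvd_mul_iff_right (by omega : 0 < q - 1)).mp hdvd
  obtain ⟨t, rfl⟩ := hdvd2
  refine ⟨((g ^ t : Kˣ) : K), ?_⟩
  have h3 : (g ^ t) ^ (q + 1) = au := by rw [← hs, ← pow_mul, mul_comm]
  calc ((g ^ t : Kˣ) : K) ^ (q + 1) = (((g ^ t) ^ (q + 1) : Kˣ) : K) := by push_cast; ring
    _ = a := by rw [h3]; rfl

include hφ2 in
lemma witt_step {q : ℕ} (hcard : Fintype.card K = q ^ 2) (hq : 2 ≤ q)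
    (hφ : ∀ x, φ x = x ^ q)
    {D : Submodule K (Fin N → K)} (hD : D ≤ hermDual φ D)
    (hdim : 2 * Module.finrank K D + 2 ≤ N) :
    ∃ D' : Submodule K (Fin N → K), D ≤ D' ∧ D' ≤ hermDual φ D' ∧
      Module.finrank K D' = Module.finrank K D + 1 := by
  classical
  set W := hermDual φ D with hW
  have hfrW : Module.finrank K W = N - Module.finrank K D := finrank_hermDual φ D
  have hfrD : Module.finrank K D ≤ N := finrank_le_pi D
  -- helper: any isotropic vector in `W \ D` does the job
  have key : ∀ v : Fin N → K, v ∈ W → v ∉ D → herm φ v v = 0 →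
      ∃ D' : Submodule K (Fin N → K), D ≤ D' ∧ D' ≤ hermDual φ D' ∧
        Module.finrank K D' = Module.finrank K D + 1 := by
    intro v hvW hvD hvv
    refine ⟨D ⊔ Submodule.span K {v}, le_sup_left, ?_, finrank_sup_span_singleton hvD⟩
    intro y hy
    obtain ⟨d, hd, w, hw, rfl⟩ := Submodule.mem_sup.mp hy
    obtain ⟨c, rfl⟩ := Submodule.mem_span_singleton.mp hw
    rw [mem_hermDual_sup φ hφ2]
    constructor
    · exact (hermDual φ D).add_mem (hD hd) ((hermDual φ D).smul_mem c hvW)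
    · have hdv : herm φ d v = 0 := by
        rw [← herm_conj φ hφ2 v d, (mem_hermDual' φ).mp hvW d hd, map_zero]
      rw [herm_add_left, herm_smul_left, hdv, hvv, mul_zero, add_zero]
  have hDW : D ≤ W := hD
  -- first vector u in `W \ D`
  have hlt : D < W := by
    refine lt_of_le_of_ne hDW fun h => ?_
    have := hfrW
    rw [← h] at this
    omega
  obtain ⟨u, huW, huD⟩ := SetLike.exists_of_lt hlt
  by_cases h1 : herm φ u u = 0
  · exact key u huW huD h1
  -- second vector outside D ⊔ span u
  set D2 := D ⊔ Submodule.span K {u} with hD2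
  have hD2W : D2 ≤ W := sup_le hDW ((Submodule.span_singleton_le_iff_mem u W).mpr huW)
  have hfrD2 : Module.finrank K D2 = Module.finrank K D + 1 :=
    finrank_sup_span_singleton huD
  have hlt2 : D2 < W := by
    refine lt_of_le_of_ne hD2W fun h => ?_
    rw [← h] at hfrW
    omega
  obtain ⟨w, hwW, hwD2⟩ := SetLike.exists_of_lt hlt2
  set cc := herm φ u w / herm φ u u with hcc
  set w' := w - cc • u with hw'
  have huD2 : u ∈ D2 := Submodule.mem_sup_right (Submodule.mem_span_singleton_self u)
  have hw'W : w' ∈ W := W.sub_mem hwW (W.smul_mem cc huW)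
  have hw'D2 : w' ∉ D2 := by
    intro hmem
    apply hwD2
    have : w = w' + cc • u := by rw [hw']; abel
    rw [this]
    exact D2.add_mem hmem (D2.smul_mem cc huD2)
  have hw'D : w' ∉ D := fun h => hw'D2 (Submodule.mem_sup_left h)
  have huw' : herm φ u w' = 0 := by
    have : herm φ u w' = herm φ u w + (-cc) * herm φ u u := by
      rw [hw', sub_eq_add_neg, ← neg_smul, herm_add_right, herm_smul_right]
    rw [this, hcc, neg_mul, div_mul_cancel₀ _ h1, add_neg_cancel]
  have hw'u : herm φ w' u = 0 := by
    rw [← herm_conj φ hφ2 u w', huw', map_zero]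
  by_cases h2 : herm φ w' w' = 0
  · exact key w' hw'W hw'D h2
  -- build isotropic vector from u and w'
  set a := herm φ u u with ha
  set b := herm φ w' w' with hb
  have hfixa : a ^ q = a := by rw [← hφ, herm_conj φ hφ2]
  have hfixb : b ^ q = b := by rw [← hφ, herm_conj φ hφ2]
  set tt := -(a / b) with htt
  have htt0 : tt ≠ 0 := by
    simp only [htt, neg_ne_zero, div_ne_zero_iff]
    exact ⟨h1, h2⟩
  have httq : tt ^ q = tt := by
    rw [← hφ, htt, map_neg, map_div₀, hφ, hφ, hfixa, hfixb]
  obtain ⟨c, hc⟩ := exists_norm_eq hcard hq tt htt0 httq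
  have hc0 : c ≠ 0 := by
    intro h
    rw [h, zero_pow (by omega : q + 1 ≠ 0)] at hc
    exact htt0 hc.symm
  set v := u + c • w' with hv
  have hvW : v ∈ W := W.add_mem huW (W.smul_mem c hw'W)
  have hvv : herm φ v v = 0 := by
    have e1 : herm φ v v = a + c * herm φ u w' + φ c * (herm φ w' u + c * b) := by
      rw [hv, herm_add_left, herm_add_right, herm_smul_right, herm_smul_left,
        herm_add_right, herm_smul_right]
    rw [e1, huw', hw'u, mul_zero, add_zero, zero_add, hφ]
    have h5 : c ^ q * (c * b) = tt * b := by
      rw [← hc]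
      ring
    rw [h5, htt]
    field_simp
    ring
  have hvD : v ∉ D := by
    intro hmem
    apply hw'D2
    have h3 : c • w' = v - u := by rw [hv]; abel
    have h4 : c • w' ∈ D2 := by
      rw [h3]
      exact D2.sub_mem (Submodule.mem_sup_left hmem) huD2
    have := D2.smul_mem c⁻¹ h4
    rwa [smul_smul, inv_mul_cancel₀ hc0, one_smul] at this
  exact key v hvW hvD hvv

include hφ2 in
lemma witt_extend {q : ℕ} (hcard : Fintype.card K = q ^ 2) (hq : 2 ≤ q)
    (hφ : ∀ x, φ x = x ^ q) (s : ℕ) (hs : 2 * s ≤ N) :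
    ∀ (k : ℕ) (D : Submodule K (Fin N → K)), D ≤ hermDual φ D →
      Module.finrank K D + k = s →
      ∃ D' : Submodule K (Fin N → K), D ≤ D' ∧ D' ≤ hermDual φ D' ∧
        Module.finrank K D' = s := by
  intro k
  induction k with
  | zero => intro D hD hdim; exact ⟨D, le_rfl, hD, by omega⟩
  | succ k ih =>
    intro D hD hdim
    obtain ⟨D1, hDD1, hD1, hfr1⟩ := witt_step φ hφ2 hcard hq hφ hD (by omega)
    obtain ⟨D', h1, h2, h3⟩ := ih D1 hD1 (by omega)
    exact ⟨D', le_trans hDD1 h1, h2, h3⟩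


end LinAlg

lemma NT_base (q m Δ e : ℕ) (hΔ : Δ * q ^ (m - e) + Δ < q ^ (2 * m) - 1) (hq : 2 ≤ q) :
    ∀ v a b, v ≤ m - e → 0 < a → a ≤ Δ → 0 < b → b ≤ Δ →
      ¬ (q ^ (2 * m) - 1) ∣ (a * q ^ v + b) := by
  intro v a b hv ha0 haΔ hb0 hbΔ hdvd
  have h1 : a * q ^ v ≤ Δ * q ^ (m - e) :=
    Nat.mul_le_mul haΔ (Nat.pow_le_pow_right (by omega) hv)
  have h2 : 0 < a * q ^ v + b := by positivity
  have h3 := Nat.le_of_dvd h2 hdvd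
  omega

lemma NT (q m Δ e : ℕ) (hq : 2 ≤ q) (hm : 1 ≤ m)
    (he : e = if Even m then 1 else 0)
    (hΔ : Δ * q ^ (m - e) + Δ < q ^ (2 * m) - 1) :
    ∀ u a b, Odd u → 0 < a → a ≤ Δ → 0 < b → b ≤ Δ →
      ¬ (q ^ (2 * m) - 1) ∣ (a * q ^ u + b) := by
  have hQ1 : 1 ≤ q ^ (2 * m) := Nat.one_le_pow _ _ (by omega)
  have hmod : q ^ (2 * m) ≡ 1 [MOD q ^ (2 * m) - 1] := by
    have : 1 ≡ q ^ (2 * m) [MOD q ^ (2 * m) - 1] :=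
      (Nat.modEq_iff_dvd' hQ1).mpr dvd_rfl
    exact this.symm
  intro u
  induction u using Nat.strong_induction_on with
  | _ u ih =>
    intro a b hu ha0 haΔ hb0 hbΔ hdvd
    by_cases hbig : 2 * m ≤ u
    · -- reduce the exponent by 2m
      have hsplit : q ^ u = q ^ (u - 2 * m) * q ^ (2 * m) := by
        rw [← pow_add]
        congr 1
        omega
      have hcong : a * q ^ u + b ≡ a * q ^ (u - 2 * m) + b [MOD q ^ (2 * m) - 1] := by
        calc a * q ^ u + b = a * q ^ (u - 2 * m) * q ^ (2 * m) + b := by rw [hsplit, mul_assoc]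
          _ ≡ a * q ^ (u - 2 * m) * 1 + b [MOD q ^ (2 * m) - 1] :=
              Nat.ModEq.add_right b (Nat.ModEq.mul_left _ hmod)
          _ = a * q ^ (u - 2 * m) + b := by ring_nf
      have hdvd2 : (q ^ (2 * m) - 1) ∣ (a * q ^ (u - 2 * m) + b) := by
        have := (Nat.modEq_zero_iff_dvd).mpr hdvd
        exact (Nat.modEq_zero_iff_dvd).mp ((hcong.symm.trans this))
      have hult : u - 2 * m < u := by omega
      have hodd : Odd (u - 2 * m) := by
        rcases hu with ⟨r, hr⟩
        exact ⟨r - m, by omega⟩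
      exact ih (u - 2 * m) hult a b hodd ha0 haΔ hb0 hbΔ hdvd2
    · push_neg at hbig
      by_cases hsmall : u ≤ m - e
      · exact NT_base q m Δ e hΔ hq u a b hsmall ha0 haΔ hb0 hbΔ hdvd
      · push_neg at hsmall
        set v := 2 * m - u with hv
        have hvbound : v ≤ m - e := by
          rcases hu with ⟨r, hr⟩
          rcases Nat.even_or_odd m with hme | hmo
          · rcases hme with ⟨s, hs⟩
            have he1 : e = 1 := by rw [he, if_pos ⟨s, hs⟩]
            omega
          · rcases hmo with ⟨s, hs⟩
            have he0 : e = 0 := by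
              rw [he, if_neg]
              intro hcon
              rcases hcon with ⟨t, ht⟩
              omega
            omega
        -- multiply by q^v
        have hd2 : (q ^ (2 * m) - 1) ∣ (a * q ^ u + b) * q ^ v := hdvd.mul_right _
        have hsplit2 : (a * q ^ u + b) * q ^ v = a * q ^ (2 * m) + b * q ^ v := by
          rw [add_mul, mul_assoc, ← pow_add]
          congr 3
          omega
        have hcong2 : a * q ^ (2 * m) + b * q ^ v ≡ b * q ^ v + a [MOD q ^ (2 * m) - 1] := by
          calc a * q ^ (2 * m) + b * q ^ v ≡ a * 1 + b * q ^ v [MOD q ^ (2 * m) - 1] :=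
                Nat.ModEq.add_right _ (Nat.ModEq.mul_left _ hmod)
            _ = b * q ^ v + a := by ring
        have hdvd3 : (q ^ (2 * m) - 1) ∣ (b * q ^ v + a) := by
          rw [hsplit2] at hd2
          have := (Nat.modEq_zero_iff_dvd).mpr hd2
          exact (Nat.modEq_zero_iff_dvd).mp (hcong2.symm.trans this)
        exact NT_base q m Δ e hΔ hq v b a hvbound hb0 hbΔ ha0 haΔ hdvd3

lemma two_mul_le_two_pow : ∀ m : ℕ, 1 ≤ m → 2 * m ≤ 2 ^ m := by
  intro m
  induction m with
  | zero => omega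
  | succ n ih =>
    intro _
    rcases Nat.eq_zero_or_pos n with rfl | hn
    · norm_num
    · have h1 := ih hn
      have h2 : 2 ≤ 2 ^ n := by
        calc 2 = 2 ^ 1 := by norm_num
        _ ≤ 2 ^ n := Nat.pow_le_pow_right (by omega) hn
      rw [pow_succ]
      omega

lemma two_mul_le_two_pow_pred : ∀ m : ℕ, 4 ≤ m → 2 * m ≤ 2 ^ (m - 1) := by
  intro m
  induction m with
  | zero => omega
  | succ n ih =>
    intro hn
    rcases Nat.lt_or_ge n 4 with h4 | h4
    · have hn3 : n = 3 := by omega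
      subst hn3
      norm_num
    · have h1 := ih h4
      have h2 : 2 ≤ 2 ^ (n - 1) := by
        calc 2 = 2 ^ 1 := by norm_num
        _ ≤ 2 ^ (n - 1) := Nat.pow_le_pow_right (by omega) (by omega)
      have h3 : (n + 1) - 1 = (n - 1) + 1 := by omega
      rw [h3, pow_succ]
      omega

/-- The size bound `2·m·Δ ≤ q^{2m} - 1`, odd case. -/
lemma size_bound_odd (q m Δ : ℕ) (hq : 2 ≤ q) (hm : 1 ≤ m) (hΔ : Δ ≤ q ^ m - 2) :
    2 * (m * Δ) ≤ q ^ (2 * m) - 1 := by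
  have h1 : 2 * m ≤ q ^ m := by
    calc 2 * m ≤ 2 ^ m := two_mul_le_two_pow m hm
    _ ≤ q ^ m := Nat.pow_le_pow_left hq m
  have h2 : q ^ m * q ^ m = q ^ (2 * m) := by
    rw [← pow_add]
    congr 1
    omega
  have hQ2 : 2 ≤ q ^ m := by
    calc 2 ≤ q := hq
    _ = q ^ 1 := (pow_one q).symm
    _ ≤ q ^ m := Nat.pow_le_pow_right (by omega) hm
  have h3 : 2 * (m * Δ) ≤ q ^ m * (q ^ m - 2) := by
    rw [← mul_assoc]
    exact Nat.mul_le_mul h1 hΔ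
  have h4 : q ^ m * (q ^ m - 2) = q ^ (2 * m) - 2 * q ^ m := by
    rw [Nat.mul_sub, h2]
    ring_nf
  have hX : 2 * q ^ m ≤ q ^ (2 * m) := by
    calc 2 * q ^ m ≤ q ^ m * q ^ m := Nat.mul_le_mul_right _ hQ2
    _ = q ^ (2 * m) := h2
  omega

/-- The size bound, even case (`m ≥ 4`). -/
lemma size_bound_even (q m Δ : ℕ) (hq : 2 ≤ q) (hm : 4 ≤ m) (hΔ : Δ ≤ q ^ (m + 1) - q ^ 2) :
    2 * (m * Δ) ≤ q ^ (2 * m) - 1 := by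
  have h1 : 2 * m ≤ q ^ (m - 1) := by
    calc 2 * m ≤ 2 ^ (m - 1) := two_mul_le_two_pow_pred m hm
    _ ≤ q ^ (m - 1) := Nat.pow_le_pow_left hq _
  have h2 : q ^ (m - 1) * q ^ (m + 1) = q ^ (2 * m) := by
    rw [← pow_add]
    congr 1
    omega
  have h2' : q ^ (m - 1) * q ^ 2 = q ^ (m + 1) := by
    rw [← pow_add]
    congr 1
    omega
  have h3 : 2 * (m * Δ) ≤ q ^ (m - 1) * (q ^ (m + 1) - q ^ 2) := by
    rw [← mul_assoc]
    exact Nat.mul_le_mul h1 hΔ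
  have h4 : q ^ (m - 1) * (q ^ (m + 1) - q ^ 2) = q ^ (2 * m) - q ^ (m + 1) := by
    rw [Nat.mul_sub, h2, h2']
  have h5 : 1 ≤ q ^ (m + 1) := Nat.one_le_pow _ _ (by omega)
  omega

/-- `Δ`-bound hypothesis for NT, odd case. -/
lemma delta_bound_odd (q m Δ : ℕ) (hq : 2 ≤ q) (hm : 1 ≤ m) (hΔ : Δ ≤ q ^ m - 2) :
    Δ * q ^ (m - 0) + Δ < q ^ (2 * m) - 1 := by
  have h2 : q ^ m * q ^ m = q ^ (2 * m) := by
    rw [← pow_add]; congr 1; omega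
  have hQ2 : 2 ≤ q ^ m := by
    calc 2 ≤ q := hq
    _ = q ^ 1 := (pow_one q).symm
    _ ≤ q ^ m := Nat.pow_le_pow_right (by omega) hm
  have h3 : Δ * q ^ (m - 0) ≤ (q ^ m - 2) * q ^ m := by
    rw [Nat.sub_zero]
    exact Nat.mul_le_mul_right _ hΔ
  have h4 : (q ^ m - 2) * q ^ m = q ^ (2 * m) - 2 * q ^ m := by
    rw [Nat.sub_mul, h2]
  have hX : 2 * q ^ m ≤ q ^ (2 * m) := by
    calc 2 * q ^ m ≤ q ^ m * q ^ m := Nat.mul_le_mul_right _ hQ2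
    _ = q ^ (2 * m) := h2
  omega

/-- `Δ`-bound hypothesis for NT, even case. -/
lemma delta_bound_even (q m Δ : ℕ) (hq : 2 ≤ q) (hm : 1 ≤ m)
    (hΔ : Δ ≤ q ^ (m + 1) - q ^ 2) :
    Δ * q ^ (m - 1) + Δ < q ^ (2 * m) - 1 := by
  have h2 : q ^ (m + 1) * q ^ (m - 1) = q ^ (2 * m) := by
    rw [← pow_add]; congr 1; omega
  have h2' : q ^ 2 * q ^ (m - 1) = q ^ (m + 1) := by
    rw [← pow_add]; congr 1; omega
  have hq2 : 4 ≤ q ^ 2 := by nlinarith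
  have h1 : 1 ≤ q ^ (m - 1) := Nat.one_le_pow _ _ (by omega)
  have hBC : q ^ 2 ≤ q ^ (m + 1) := Nat.pow_le_pow_right (by omega) (by omega)
  have h3 : Δ * q ^ (m - 1) ≤ (q ^ (m + 1) - q ^ 2) * q ^ (m - 1) :=
    Nat.mul_le_mul_right _ hΔ
  have h4 : (q ^ (m + 1) - q ^ 2) * q ^ (m - 1) = q ^ (2 * m) - q ^ (m + 1) := by
    rw [Nat.sub_mul, h2, h2']
  have h5 : q ^ (m + 1) ≤ q ^ (2 * m) := Nat.pow_le_pow_right (by omega) (by omega)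
  omega


section Code

variable {F E : Type*} [Field F] [Fintype F] [DecidableEq F]
  [Field E] [Fintype E] [DecidableEq E] [Algebra F E]

variable (q m Δ : ℕ) (α : E)

/-- defining exponents: `1 ≤ i ≤ Δ` not divisible by `q^2`. -/
def I0 : Finset ℕ := (Finset.Ioc 0 Δ).filter (fun i => ¬ q ^ 2 ∣ i)

lemma card_I0 : (I0 q Δ).card = Δ - Δ / q ^ 2 := by
  classical
  have h1 : (Finset.Ioc 0 Δ).filter (fun i => q ^ 2 ∣ i) ∪ I0 q Δ = Finset.Ioc 0 Δ :=
    Finset.filter_union_filter_not_eq _ _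
  have h2 : Disjoint ((Finset.Ioc 0 Δ).filter (fun i => q ^ 2 ∣ i)) (I0 q Δ) :=
    Finset.disjoint_filter_filter_not _ _ _
  have h3 := Finset.card_union_of_disjoint h2
  rw [h1] at h3
  rw [Nat.card_Ioc] at h3
  have h4 := Nat.Ioc_filter_dvd_card_eq_div Δ (q ^ 2)
  omega

variable {q m Δ} in
lemma mem_I0 {i : ℕ} : i ∈ I0 q Δ ↔ 0 < i ∧ i ≤ Δ ∧ ¬ q ^ 2 ∣ i := by
  simp [I0, and_assoc]

/-- The `i`-th parity check. -/
def chk (i : ℕ) (c : Fin (q ^ (2 * m) - 1) → F) : E :=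
  ∑ j, algebraMap F E (c j) * α ^ (i * (j : ℕ))

/-- All parity checks bundled. -/
noncomputable def chkL : (Fin (q ^ (2 * m) - 1) → F) →ₗ[F] (I0 q Δ → E) where
  toFun c := fun i => chk q m α (i : ℕ) c
  map_add' c d := by
    ext i
    simp [chk, add_mul, Finset.sum_add_distrib]
  map_smul' a c := by
    ext i
    simp only [chk, Pi.smul_apply, smul_eq_mul, map_mul, RingHom.id_apply, Pi.smul_apply]
    rw [Finset.smul_sum]
    refine Finset.sum_congr rfl fun j _ => ?_
    rw [Algebra.smul_def, mul_assoc]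

/-- The big code `B`. -/
noncomputable def codeB : Submodule F (Fin (q ^ (2 * m) - 1) → F) :=
  LinearMap.ker (chkL (F := F) q m Δ α)

variable {q m Δ α} in
lemma mem_codeB {c : Fin (q ^ (2 * m) - 1) → F} : c ∈ codeB q m Δ α ↔ ∀ i ∈ I0 q Δ, chk q m α i c = 0 := by
  constructor
  · intro hc i hi
    have := congrFun (LinearMap.mem_ker.mp hc) ⟨i, hi⟩
    simpa [chkL] using this
  · intro h
    rw [codeB, LinearMap.mem_ker]
    ext i
    exact h i i.2

lemma finrank_codeB_ge (hq : 2 ≤ q) (hfr : Module.finrank F E = m) :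
    q ^ (2 * m) - 1 - m * (Δ - Δ / q ^ 2) ≤ Module.finrank F ↥(codeB (F := F) q m Δ α) := by
  classical
  have h1 := LinearMap.finrank_range_add_finrank_ker (chkL (F := F) q m Δ α)
  have h2 : Module.finrank F (LinearMap.range (chkL (F := F) q m Δ α)) ≤ m * (Δ - Δ / q ^ 2) := by
    have h3 := Submodule.finrank_le (LinearMap.range (chkL (F := F) q m Δ α))
    have h4 : Module.finrank F (I0 q Δ → E) = (I0 q Δ).card * m := by
      rw [Module.finrank_pi_fintype, Finset.sum_const]
      · simp [hfr, Fintype.card_coe, smul_eq_mul]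
    rw [h4, card_I0] at h3
    calc Module.finrank F (LinearMap.range (chkL (F := F) q m Δ α))
        ≤ (Δ - Δ / q ^ 2) * m := h3
      _ = m * (Δ - Δ / q ^ 2) := Nat.mul_comm _ _
  have h5 : Module.finrank F (Fin (q ^ (2 * m) - 1) → F) = q ^ (2 * m) - 1 := by
    rw [Module.finrank_pi]
    exact Fintype.card_fin _
  rw [h5] at h1
  rw [codeB]
  omega

variable (φE : E →+* E) (hφE : ∀ x : E, φE x = x ^ q)

include hφE in
lemma chk_qsq (hFcard : Fintype.card F = q ^ 2) (i : ℕ) (c : Fin (q ^ (2 * m) - 1) → F) :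
    chk q m α (q ^ 2 * i) c = (chk q m α i c) ^ q ^ 2 := by
  have hsq : ∀ x : E, φE (φE x) = x ^ q ^ 2 := by
    intro x
    rw [hφE, hφE, ← pow_mul, ← sq]
  simp only [chk]
  rw [← hsq, map_sum, map_sum]
  refine Finset.sum_congr rfl fun j _ => ?_
  rw [map_mul, map_mul, hsq, hsq, ← map_pow, ← pow_mul]
  congr 2
  · rw [← hFcard, FiniteField.pow_card]
  · ring

include hφE in
lemma chk_eq_zero_of_mem (hq : 2 ≤ q) (hFcard : Fintype.card F = q ^ 2)
    {c : Fin (q ^ (2 * m) - 1) → F} (hc : c ∈ codeB q m Δ α) :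
    ∀ i, 0 < i → i ≤ Δ → chk q m α i c = 0 := by
  intro i
  induction i using Nat.strong_induction_on with
  | _ i ih =>
    intro hi0 hiΔ
    by_cases hdvd : q ^ 2 ∣ i
    · obtain ⟨i', rfl⟩ := hdvd
      have hq2 : 2 ≤ q ^ 2 := by nlinarith
      have hi'0 : 0 < i' := by
        rcases Nat.eq_zero_or_pos i' with rfl | h
        · simp at hi0
        · exact h
      have hlt : i' < q ^ 2 * i' := by nlinarith
      have := ih i' hlt hi'0 (le_trans (le_of_lt hlt) hiΔ)
      rw [chk_qsq q m α φE hφE hFcard, this]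
      exact zero_pow (by positivity)
    · exact mem_codeB.mp hc i (mem_I0.mpr ⟨hi0, hiΔ, hdvd⟩)

include hφE in
lemma dist_codeB (hq : 2 ≤ q) (hm : 1 ≤ m) (hFcard : Fintype.card F = q ^ 2)
    (hα : orderOf α = q ^ (2 * m) - 1)
    {c : Fin (q ^ (2 * m) - 1) → F} (hc : c ∈ codeB q m Δ α) (hne : c ≠ 0) : Δ + 1 ≤ hammingNorm c := by
  classical
  by_contra hcon
  push_neg at hcon
  set w := hammingNorm c with hwdef
  have hwΔ : w ≤ Δ := by omega
  set s : Finset (Fin (q ^ (2 * m) - 1)) := Finset.univ.filter (fun j => c j ≠ 0) with hs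
  have hscard : s.card = w := rfl
  have hw0 : 0 < w := by
    rcases Nat.eq_zero_or_pos w with h | h
    · exfalso
      apply hne
      have hsempty : s = ∅ := Finset.card_eq_zero.mp (by omega)
      ext j
      simp only [Pi.zero_apply]
      by_contra hj
      have hjs : j ∈ s := by simp [hs, hj]
      rw [hsempty] at hjs
      simp at hjs
    · exact h
  set e := s.orderIsoOfFin hscard with he
  set x : Fin w → E := fun b => α ^ (((e b : Fin (q ^ (2 * m) - 1))) : ℕ) with hx
  have hN2 : 2 ≤ q ^ (2 * m) := by
    calc 2 ≤ q := hq
    _ = q ^ 1 := (pow_one q).symm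
    _ ≤ q ^ (2 * m) := Nat.pow_le_pow_right (by omega) (by omega)
  have hα0 : α ≠ 0 := by
    intro h
    have h2 := pow_orderOf_eq_one α
    rw [hα, h, zero_pow (by omega : q ^ (2 * m) - 1 ≠ 0)] at h2
    exact zero_ne_one h2
  have hxinj : Function.Injective x := by
    intro b1 b2 hb
    have h1 : ((e b1 : Fin (q ^ (2 * m) - 1)) : ℕ) = ((e b2 : Fin (q ^ (2 * m) - 1)) : ℕ) := by
      apply pow_injOn_Iio_orderOf (x := α) <;> simp only [Set.mem_Iio, hα]
      · exact (e b1 : Fin (q ^ (2 * m) - 1)).isLt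
      · exact (e b2 : Fin (q ^ (2 * m) - 1)).isLt
      · exact hb
    have h2 : (e b1 : Fin (q ^ (2 * m) - 1)) = (e b2 : Fin (q ^ (2 * m) - 1)) := Fin.ext h1
    have h3 : e b1 = e b2 := Subtype.ext h2
    exact e.injective h3
  -- the check sums restricted to the support
  have hMv : ∀ a : Fin w, ∑ b, x b ^ ((a : ℕ) + 1) * algebraMap F E (c (e b)) = 0 := by
    intro a
    have h0 : chk q m α ((a : ℕ) + 1) c = 0 :=
      chk_eq_zero_of_mem q m Δ α φE hφE hq hFcard hc _ (by omega) (by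
        have := a.isLt; omega)
    rw [chk] at h0
    have h1 : ∑ j, algebraMap F E (c j) * α ^ (((a : ℕ) + 1) * (j : ℕ))
        = ∑ j ∈ s, algebraMap F E (c j) * α ^ (((a : ℕ) + 1) * (j : ℕ)) := by
      symm
      apply Finset.sum_subset (Finset.subset_univ s)
      intro j _ hj
      have : c j = 0 := by
        by_contra hcj
        exact hj (by simp [hs, hcj])
      rw [this, map_zero, zero_mul]
    have h2 : ∑ j ∈ s, algebraMap F E (c j) * α ^ (((a : ℕ) + 1) * (j : ℕ))
        = ∑ b : Fin w, algebraMap F E (c (e b)) * α ^ (((a : ℕ) + 1) * ((e b : Fin (q ^ (2 * m) - 1)) : ℕ)) := by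
      rw [← Finset.sum_attach s]
      exact (Fintype.sum_equiv e.toEquiv _ _ (fun b => rfl)).symm
    rw [h1, h2] at h0
    rw [← h0]
    refine Finset.sum_congr rfl fun b _ => ?_
    rw [hx, mul_comm]
    congr 1
    rw [← pow_mul]
    congr 1
    ring
  set M : Matrix (Fin w) (Fin w) E := Matrix.of fun a b => x b ^ ((a : ℕ) + 1) with hM
  have hdet : M.det ≠ 0 := by
    have hfact : M = Matrix.of fun a b => x b * Matrix.transpose (Matrix.vandermonde x) a b := by
      ext a b
      simp [hM, Matrix.vandermonde, pow_succ, mul_comm]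
    rw [hfact, Matrix.det_mul_row, Matrix.det_transpose, Matrix.det_vandermonde]
    apply mul_ne_zero
    · exact Finset.prod_ne_zero_iff.mpr fun b _ => pow_ne_zero _ hα0
    · apply Finset.prod_ne_zero_iff.mpr
      intro i _
      apply Finset.prod_ne_zero_iff.mpr
      intro j hj
      have : i < j := Finset.mem_Ioi.mp hj
      exact sub_ne_zero_of_ne (fun hh => absurd (hxinj hh) (by omega))
  have hv0 : (fun b => algebraMap F E (c (e b))) = 0 := by
    apply Matrix.eq_zero_of_mulVec_eq_zero hdet
    ext a
    simp only [Matrix.mulVec, dotProduct, Pi.zero_apply, hM, Matrix.of_apply]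
    exact hMv a
  have hb0 : algebraMap F E (c (e ⟨0, hw0⟩)) = 0 := congrFun hv0 ⟨0, hw0⟩
  have : c (e ⟨0, hw0⟩) = 0 := by
    have := (algebraMap F E).injective
    exact this (by rw [hb0, map_zero])
  have hmem : (e ⟨0, hw0⟩ : Fin (q ^ (2 * m) - 1)) ∈ s := (e ⟨0, hw0⟩).2
  exact (Finset.mem_filter.mp hmem).2 this


/-- Geometric-sum vanishing. -/
lemma geom_vanish (hq : 2 ≤ q) (hm : 1 ≤ m) (hα : orderOf α = q ^ (2 * m) - 1)
    (s : ℕ) (hs : ¬ (q ^ (2 * m) - 1) ∣ s) :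
    ∑ j : Fin (q ^ (2 * m) - 1), α ^ (s * (j : ℕ)) = 0 := by
  have hαs : α ^ s ≠ 1 := by
    intro h
    exact hs (hα ▸ orderOf_dvd_of_pow_eq_one h)
  have h1 : ∑ j : Fin (q ^ (2 * m) - 1), α ^ (s * (j : ℕ))
      = ∑ j ∈ Finset.range (q ^ (2 * m) - 1), (α ^ s) ^ j := by
    rw [Fin.sum_univ_eq_sum_range (fun j => α ^ (s * j))]
    exact Finset.sum_congr rfl fun j _ => by rw [pow_mul]
  rw [h1, geom_sum_eq hαs]
  have h2 : (α ^ s) ^ (q ^ (2 * m) - 1) = 1 := by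
    rw [← pow_mul, mul_comm, pow_mul, ← hα, pow_orderOf_eq_one, one_pow]
  rw [h2, sub_self, zero_div]

/-- partial trace. -/
def Tr0 (x : E) : E := ∑ t ∈ Finset.range m, x ^ q ^ (2 * t)

variable (φE : E →+* E) (hφE : ∀ x : E, φE x = x ^ q)

include hφE in
lemma Tr0_fixed (hm : 1 ≤ m) (hEcard : Fintype.card E = q ^ (2 * m)) (x : E) :
    (Tr0 q m x) ^ q ^ 2 = Tr0 q m x := by
  have hsq : ∀ y : E, y ^ q ^ 2 = φE (φE y) := by
    intro y
    rw [hφE, hφE, ← pow_mul, ← sq]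
  have hxm : x ^ q ^ (2 * m) = x := by rw [← hEcard]; exact FiniteField.pow_card x
  rw [hsq, Tr0, map_sum, map_sum]
  have hterm : ∀ t, φE (φE (x ^ q ^ (2 * t))) = x ^ q ^ (2 * (t + 1)) := by
    intro t
    rw [← hsq, ← pow_mul, ← pow_add, show 2 * t + 2 = 2 * (t + 1) from by ring]
  obtain ⟨m', rfl⟩ : ∃ m', m = m' + 1 := ⟨m - 1, by omega⟩
  rw [Finset.sum_congr rfl fun t _ => hterm t]
  show _ = ∑ t ∈ Finset.range (m' + 1), x ^ q ^ (2 * t)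
  have hL : ∑ t ∈ Finset.range (m' + 1), x ^ q ^ (2 * (t + 1))
      = (∑ t ∈ Finset.range m', x ^ q ^ (2 * (t + 1))) + x := by
    rw [Finset.sum_range_succ, hxm]
  have hR : ∑ t ∈ Finset.range (m' + 1), x ^ q ^ (2 * t)
      = x + ∑ t ∈ Finset.range m', x ^ q ^ (2 * (t + 1)) := by
    rw [Finset.sum_range_succ' (fun t => x ^ q ^ (2 * t)) m']
    norm_num [add_comm]
  rw [hL, hR, add_comm]

include hφE in
lemma Tr0_mem_range (hq : 2 ≤ q) (hm : 1 ≤ m) (hFcard : Fintype.card F = q ^ 2)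
    (hEcard : Fintype.card E = q ^ (2 * m)) (x : E) :
    ∃ a : F, algebraMap F E a = Tr0 q m x := by
  classical
  set P : E[X] := X ^ q ^ 2 - X with hP
  have hq2 : 1 < q ^ 2 := by nlinarith
  have hPdeg : P.natDegree = q ^ 2 := FiniteField.X_pow_card_sub_X_natDegree_eq E hq2
  have hP0 : P ≠ 0 := by
    intro h
    rw [h] at hPdeg
    simp at hPdeg
    omega
  set img : Finset E := Finset.univ.image (algebraMap F E) with himg
  have hsub : img ⊆ P.roots.toFinset := by
    intro z hz
    obtain ⟨a, _, rfl⟩ := Finset.mem_image.mp hz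
    rw [Multiset.mem_toFinset, Polynomial.mem_roots hP0, Polynomial.IsRoot, hP]
    simp only [eval_sub, eval_pow, eval_X]
    rw [← map_pow, ← hFcard, FiniteField.pow_card, sub_self]
  have hcard_img : img.card = q ^ 2 := by
    rw [himg, Finset.card_image_of_injective _ (algebraMap F E).injective,
      Finset.card_univ, hFcard]
  have hcard_roots : P.roots.toFinset.card ≤ q ^ 2 := by
    calc P.roots.toFinset.card ≤ Multiset.card P.roots := P.roots.toFinset_card_le
      _ ≤ P.natDegree := Polynomial.card_roots' P
      _ = q ^ 2 := hPdeg
  have heq : img = P.roots.toFinset := Finset.eq_of_subset_of_card_le hsub (by omega)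
  have hroot : Tr0 q m x ∈ P.roots.toFinset := by
    rw [Multiset.mem_toFinset, Polynomial.mem_roots hP0, Polynomial.IsRoot, hP]
    simp only [eval_sub, eval_pow, eval_X]
    rw [Tr0_fixed q m φE hφE hm hEcard, sub_self]
  rw [← heq, himg] at hroot
  obtain ⟨a, _, ha⟩ := Finset.mem_image.mp hroot
  exact ⟨a, ha⟩

include hφE in
lemma hermDual_le_codeB (φF : F →+* F) (hφF : ∀ x : F, φF x = x ^ q)
    (hq : 2 ≤ q) (hm : 1 ≤ m)
    (hFcard : Fintype.card F = q ^ 2) (hEcard : Fintype.card E = q ^ (2 * m))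
    (hα : orderOf α = q ^ (2 * m) - 1)
    (hNT : ∀ u i i', Odd u → i ∈ I0 q Δ → i' ∈ I0 q Δ →
      ¬ (q ^ (2 * m) - 1) ∣ (i * q ^ u + i')) :
    hermDual φF (codeB q m Δ α) ≤ codeB q m Δ α := by
  classical
  intro y hy
  rw [mem_codeB]
  intro i hi
  set ι := algebraMap F E with hι
  choose tr htr using fun x : E => Tr0_mem_range q m φE hφE hq hm hFcard hEcard x
  set k := i * q ^ (2 * m - 1) with hk
  -- the explicit codewords
  have hcw : ∀ γ : E,
      (fun j : Fin (q ^ (2 * m) - 1) => tr (γ * α ^ (k * (j : ℕ)))) ∈ codeB q m Δ α := by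
    intro γ
    rw [mem_codeB]
    intro i' hi'
    rw [chk]
    have h1 : ∀ j : Fin (q ^ (2 * m) - 1), ι (tr (γ * α ^ (k * (j:ℕ)))) * α ^ (i' * (j:ℕ))
        = ∑ t ∈ Finset.range m, γ ^ q ^ (2*t) * α ^ ((k * q ^ (2*t) + i') * (j:ℕ)) := by
      intro j
      rw [htr, Tr0, Finset.sum_mul]
      refine Finset.sum_congr rfl fun t _ => ?_
      rw [mul_pow, ← pow_mul, mul_assoc, ← pow_add,
        show k * (j:ℕ) * q ^ (2*t) + i' * (j:ℕ) = (k * q ^ (2*t) + i') * (j:ℕ) from by ring]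
    rw [Finset.sum_congr rfl fun j _ => h1 j, Finset.sum_comm]
    refine Finset.sum_eq_zero fun t ht => ?_
    rw [← Finset.mul_sum]
    have hdvd : ¬ (q ^ (2 * m) - 1) ∣ (k * q ^ (2*t) + i') := by
      have heq : k * q ^ (2*t) = i * q ^ (2*m - 1 + 2*t) := by
        rw [hk, mul_assoc, ← pow_add]
      rw [heq]
      exact hNT (2*m - 1 + 2*t) i i' ⟨m + t - 1, by omega⟩ hi hi'
    rw [geom_vanish q m α hq hm hα _ hdvd, mul_zero]
  -- pairing with the codewords
  set w : ℕ → E := fun t =>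
    ∑ j : Fin (q ^ (2 * m) - 1), ι (y j) ^ q * α ^ ((k * q ^ (2*t)) * (j:ℕ)) with hw
  have hpair : ∀ γ : E, ∑ t ∈ Finset.range m, w t * γ ^ q ^ (2*t) = 0 := by
    intro γ
    have h0 : ∑ j : Fin (q ^ (2 * m) - 1), φF (y j) * tr (γ * α ^ (k * (j:ℕ))) = 0 :=
      (mem_hermDual φF).mp hy _ (hcw γ)
    have h1 := congrArg ι h0
    rw [map_sum, map_zero] at h1
    have h2 : ∀ j : Fin (q ^ (2 * m) - 1), ι (φF (y j) * tr (γ * α ^ (k * (j:ℕ))))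
        = ∑ t ∈ Finset.range m,
            (ι (y j) ^ q * α ^ ((k * q ^ (2*t)) * (j:ℕ))) * γ ^ q ^ (2*t) := by
      intro j
      rw [map_mul, htr, Tr0, hφF, map_pow, Finset.mul_sum]
      refine Finset.sum_congr rfl fun t _ => ?_
      rw [mul_pow, ← pow_mul,
        show k * (j:ℕ) * q ^ (2*t) = k * q ^ (2*t) * (j:ℕ) from by ring]
      ring
    rw [Finset.sum_congr rfl fun j _ => h2 j, Finset.sum_comm] at h1
    rw [← h1]
    refine Finset.sum_congr rfl fun t _ => ?_
    rw [← Finset.sum_mul]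
  -- polynomial argument: w 0 = 0
  have hw0 : w 0 = 0 := by
    set P : Polynomial E :=
      ∑ t ∈ Finset.range m, Polynomial.C (w t) * Polynomial.X ^ (q ^ (2*t)) with hP
    have hev : ∀ γ : E, P.eval γ = 0 := by
      intro γ
      rw [hP, Polynomial.eval_finset_sum, ← hpair γ]
      refine Finset.sum_congr rfl fun t _ => ?_
      simp
    have hdeg : P.natDegree < Fintype.card E := by
      rw [hEcard]
      have h3 : P.natDegree ≤ q ^ (2*(m-1)) := by
        rw [hP]
        refine Polynomial.natDegree_sum_le_of_forall_le _ _ fun t ht => ?_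
        refine le_trans (Polynomial.natDegree_C_mul_X_pow_le _ _) ?_
        exact Nat.pow_le_pow_right (by omega) (by have := Finset.mem_range.mp ht; omega)
      have h4 : q ^ (2*(m-1)) < q ^ (2*m) := Nat.pow_lt_pow_right (by omega) (by omega)
      omega
    have hPz : P = 0 := Polynomial.eq_zero_of_natDegree_lt_card_of_eval_eq_zero P
      Function.injective_id (fun γ => hev γ) hdeg
    have hc1 : P.coeff 1 = w 0 := by
      rw [hP, Polynomial.finset_sum_coeff]
      rw [Finset.sum_eq_single 0]
      · simp
      · intro t ht ht0
        rw [Polynomial.coeff_C_mul, Polynomial.coeff_X_pow]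
        have h5 : q ^ (2*t) ≠ 1 := by
          have h6 : 2 ≤ q ^ (2*t) := by
            calc 2 ≤ q := hq
            _ = q ^ 1 := (pow_one q).symm
            _ ≤ q ^ (2*t) := Nat.pow_le_pow_right (by omega) (by omega)
          omega
        simp only [mul_ite, mul_one, mul_zero, ite_eq_right_iff]
        exact fun h => absurd h.symm h5
      · intro h0
        have hm0 : 0 ∈ Finset.range m := Finset.mem_range.mpr (by omega)
        exact absurd hm0 h0
    rw [hPz] at hc1
    simp at hc1
    exact hc1.symm
  -- conclude: apply φE to w 0 = 0
  have hfinal := congrArg φE hw0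
  rw [hw, map_sum, map_zero] at hfinal
  rw [chk, ← hfinal]
  have hι2 : ∀ j, ι (y j) ^ (q * q) = ι (y j) := by
    intro j
    rw [← map_pow, show q * q = q ^ 2 from (sq q).symm, ← hFcard, FiniteField.pow_card]
  have hq2m : q ^ (2*m - 1) * q = q ^ (2*m) := by
    rw [← pow_succ]
    congr 1
    omega
  have hαq : ∀ n : ℕ, α ^ (n * q ^ (2*m)) = α ^ n := by
    intro n
    rw [pow_mul, ← hEcard, FiniteField.pow_card]
  refine Finset.sum_congr rfl fun j _ => ?_
  have hexp : (k * q ^ (2*0)) * (j:ℕ) * q = (i * (j:ℕ)) * q ^ (2*m) := by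
    calc (k * q ^ (2*0)) * (j:ℕ) * q = (i * (j:ℕ)) * (q ^ (2*m - 1) * q) := by
          rw [hk]; ring
      _ = (i * (j:ℕ)) * q ^ (2*m) := by rw [hq2m]
  calc ι (y j) * α ^ (i * (j:ℕ))
      = ι (y j) ^ (q*q) * α ^ ((i * (j:ℕ)) * q ^ (2*m)) := by rw [hι2 j, hαq]
    _ = (ι (y j) ^ q) ^ q * (α ^ ((k * q ^ (2*0)) * (j:ℕ))) ^ q := by
        rw [← hexp, ← pow_mul, ← pow_mul]
    _ = φE (ι (y j) ^ q * α ^ ((k * q ^ (2*0)) * (j:ℕ))) := by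
        rw [map_mul, hφE, hφE]


end Code

end HermAux

/-- Hermitian dual (with respect to exponent `q`) of a set of codewords
over `F_{q^2}`. -/
def hermDualSet {K : Type*} [Field K] (q : ℕ) {n : ℕ} (C : Set (Fin n → K)) :
    Set (Fin n → K) :=
  {y | ∀ x ∈ C, ∑ i, (y i) ^ q * x i = 0}

/-- For every prime power `q`, positive `m ≠ 2`, and
`2 ≤ δ ≤ q^{m + [m even]} - 1 - (q^2-2)·[m even]`, there exists a linear code
`C ⊆ F_{q^2}^{q^{2m}-1}` of dimension `q^{2m} - 1 - m·⌈(δ-1)(1-1/q^2)⌉`,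
minimum distance at least `δ`, containing its Hermitian dual. -/
theorem exists_hermitian_dual_containing_code
    (q m : ℕ) (hq : IsPrimePow q) (hm : 0 < m) (hm2 : m ≠ 2)
    (F : Type*) [Field F] [Fintype F] [DecidableEq F] (hF : Fintype.card F = q ^ 2)
    (δ : ℕ) (hδ1 : 2 ≤ δ)
    (hδ2 : δ ≤ q ^ (m + (if Even m then 1 else 0)) - 1 -
      (q ^ 2 - 2) * (if Even m then 1 else 0)) :
    ∃ C : Submodule F (Fin (q ^ (2 * m) - 1) → F),
      Module.finrank F C = q ^ (2 * m) - 1 - m * ((δ - 1) - (δ - 1) / q ^ 2) ∧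
      (∀ c ∈ C, c ≠ 0 → δ ≤ hammingNorm c) ∧
      hermDualSet q (C : Set (Fin (q ^ (2 * m) - 1) → F)) ⊆
        (C : Set (Fin (q ^ (2 * m) - 1) → F)) := by
  classical
  open HermAux in
  obtain ⟨p, k, hpP, hk, hpk⟩ := hq
  have hpp : p.Prime := Nat.prime_iff.mpr hpP
  haveI : Fact p.Prime := ⟨hpp⟩
  have hq2 : 2 ≤ q := by
    calc 2 ≤ p := hpp.two_le
    _ = p ^ 1 := (pow_one p).symm
    _ ≤ p ^ k := Nat.pow_le_pow_right hpp.one_lt.le hk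
    _ = q := hpk
  -- characteristic of F
  haveI hcharF : CharP F p := by
    obtain ⟨p', hcp'⟩ := CharP.exists F
    haveI := hcp'
    have hp' : p'.Prime := CharP.char_is_prime F p'
    obtain ⟨n, _, hcard⟩ := FiniteField.card F p'
    have hdvd : p ∣ p' ^ (n : ℕ) := by
      rw [← hcard, hF, ← hpk]
      exact dvd_pow (dvd_pow_self p (by omega)) (by positivity)
    have hpp' : p = p' :=
      (Nat.prime_dvd_prime_iff_eq hpp hp').mp (hpp.dvd_of_dvd_pow hdvd)
    rwa [hpp']
  haveI : ExpChar F p := ExpChar.prime hpp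
  -- Frobenius on F
  set φF : F →+* F := iterateFrobenius F p k with hφFdef
  have hφF : ∀ x : F, φF x = x ^ q := by
    intro x
    rw [hφFdef, iterateFrobenius_def, hpk]
  have hφF2 : ∀ x : F, φF (φF x) = x := by
    intro x
    rw [hφF, hφF, ← pow_mul, show q * q = q ^ 2 from (sq q).symm, ← hF,
      FiniteField.pow_card]
  -- the extension field
  set f : Polynomial F := Polynomial.X ^ (q ^ (2 * m)) - Polynomial.X with hfdef
  set E := f.SplittingField with hEdef
  haveI : Finite E := Module.finite_of_finite F
  haveI : Fintype E := Fintype.ofFinite E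
  haveI : DecidableEq E := Classical.decEq E
  haveI : CharP E p := charP_of_injective_algebraMap (algebraMap F E).injective p
  haveI : ExpChar E p := ExpChar.prime hpp
  have hQ1 : 1 < q ^ (2 * m) := by
    calc 1 < q := by omega
    _ = q ^ 1 := (pow_one q).symm
    _ ≤ q ^ (2 * m) := Nat.pow_le_pow_right (by omega) (by omega)
  have hfsep : f.Separable := by
    refine galois_poly_separable p (q ^ (2 * m)) ?_
    rw [← hpk]
    exact dvd_pow (dvd_pow_self p (by omega)) (by positivity)
  have hfdeg : f.natDegree = q ^ (2 * m) :=
    FiniteField.X_pow_card_sub_X_natDegree_eq F hQ1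
  have hf0 : f ≠ 0 := by
    intro h
    rw [h] at hfdeg
    simp at hfdeg
    omega
  -- every element of E satisfies x^{q^{2m}} = x
  have hmem : ∀ x : E, x ^ (q ^ (2 * m)) = x := by
    have hQpk : q ^ (2 * m) = p ^ (k * (2 * m)) := by rw [← hpk, ← pow_mul]
    set S : Subring E :=
      { carrier := {x : E | x ^ (q ^ (2 * m)) = x}
        zero_mem' := by
          simp only [Set.mem_setOf_eq]
          exact zero_pow (by positivity)
        one_mem' := by simp
        add_mem' := by
          intro a b ha hb
          simp only [Set.mem_setOf_eq] at ha hb ⊢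
          rw [hQpk] at ha hb ⊢
          rw [add_pow_char_pow, ha, hb]
        neg_mem' := by
          intro a ha
          simp only [Set.mem_setOf_eq] at ha ⊢
          rw [hQpk] at ha ⊢
          rw [show -a = (-1) * a from by ring, mul_pow, neg_one_pow_char_pow, ha]
        mul_mem' := by
          intro a b ha hb
          simp only [Set.mem_setOf_eq] at ha hb ⊢
          rw [mul_pow, ha, hb] } with hS
    intro x
    have hx : x ∈ Algebra.adjoin F (f.rootSet E) := by
      rw [Polynomial.SplittingField.adjoin_rootSet]
      trivial
    rw [Algebra.mem_adjoin_iff] at hx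
    have hsub : Set.range (algebraMap F E) ∪ f.rootSet E ⊆ (S : Set E) := by
      rintro z (⟨a, rfl⟩ | hz)
      · show (algebraMap F E a) ^ (q ^ (2 * m)) = algebraMap F E a
        rw [← map_pow]
        congr 1
        have hiter : ∀ t : ℕ, a ^ ((q ^ 2) ^ t) = a := by
          intro t
          induction t with
          | zero => simp
          | succ n ihn =>
            rw [pow_succ, pow_mul, ihn, ← hF]
            exact FiniteField.pow_card a
        have h2m : q ^ (2 * m) = (q ^ 2) ^ m := by
          rw [← pow_mul]
        rw [h2m, hiter m]
      · have hroot := (Polynomial.mem_rootSet_of_ne hf0).mp hz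
        show z ^ (q ^ (2 * m)) = z
        have h6 : Polynomial.aeval z f = z ^ (q ^ (2 * m)) - z := by
          simp [hfdef]
        rw [h6] at hroot
        exact sub_eq_zero.mp hroot
    exact Subring.closure_le.mpr hsub hx
  -- cardinality of E
  have hcardE : Fintype.card E = q ^ (2 * m) := by
    have key : Fintype.card (f.rootSet E) = q ^ (2 * m) := by
      rw [card_rootSet_eq_natDegree hfsep (Polynomial.SplittingField.splits f), hfdeg]
    have huniv : f.rootSet E = Set.univ := by
      apply Set.eq_univ_of_forall
      intro x
      rw [Polynomial.mem_rootSet_of_ne hf0]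
      have h6 : Polynomial.aeval x f = x ^ (q ^ (2 * m)) - x := by
        simp [hfdef]
      rw [h6, hmem x, sub_self]
    have key2 : Nat.card (f.rootSet E) = q ^ (2 * m) := by
      rw [Nat.card_eq_fintype_card]
      exact key
    rw [huniv] at key2
    have key3 : Nat.card E = q ^ (2 * m) :=
      (Nat.card_congr (Equiv.Set.univ E)).symm.trans key2
    rw [← Nat.card_eq_fintype_card]
    exact key3
  -- finrank of E over F
  have hfrE : Module.finrank F E = m := by
    have hcc := Module.card_eq_pow_finrank (K := F) (V := E)
    rw [hcardE, hF, ← pow_mul] at hcc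
    have := Nat.pow_right_injective hq2 hcc
    omega
  -- primitive element
  obtain ⟨g, hg⟩ := IsCyclic.exists_monoid_generator (α := Eˣ)
  set α : E := ((g : Eˣ) : E) with hαdef
  have hαord : orderOf α = q ^ (2 * m) - 1 := by
    rw [hαdef, orderOf_units, orderOf_eq_card_of_forall_mem_zpowers
      (fun x => Subgroup.mem_zpowers_iff.mpr ?_), Nat.card_eq_fintype_card,
      Fintype.card_units, hcardE]
    obtain ⟨s, hs⟩ := hg x
    exact ⟨(s : ℤ), by rw [zpow_natCast]; exact hs⟩
  -- Frobenius on E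
  set φE : E →+* E := iterateFrobenius E p k with hφEdef
  have hφE : ∀ x : E, φE x = x ^ q := by
    intro x
    rw [hφEdef, iterateFrobenius_def, hpk]
  -- numeric setup
  have hm1 : 1 ≤ m := hm
  set Δ : ℕ := δ - 1 with hΔdef
  set e : ℕ := if Even m then 1 else 0 with hedef
  have hΔbound : Δ * q ^ (m - e) + Δ < q ^ (2 * m) - 1 := by
    rcases Nat.even_or_odd m with hme | hmo
    · have he1 : e = 1 := by rw [hedef, if_pos hme]
      have hA : q ^ 2 ≤ q ^ (m + 1) := Nat.pow_le_pow_right (by omega) (by omega)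
      have hq4 : 4 ≤ q ^ 2 := by nlinarith
      have hΔle : Δ ≤ q ^ (m + 1) - q ^ 2 := by
        rw [he1] at hδ2
        simp only [mul_one] at hδ2
        omega
      rw [he1]
      exact delta_bound_even q m Δ hq2 hm1 hΔle
    · have he0 : e = 0 := by
        rw [hedef, if_neg (Nat.not_even_iff_odd.mpr hmo)]
      have hΔle : Δ ≤ q ^ m - 2 := by
        rw [he0] at hδ2
        simp only [mul_zero, Nat.sub_zero, add_zero] at hδ2
        omega
      rw [he0]
      exact delta_bound_odd q m Δ hq2 hm1 hΔle
  have hNT0 := NT q m Δ e hq2 hm1 hedef hΔbound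
  have hNT : ∀ u i i', Odd u → i ∈ I0 q Δ → i' ∈ I0 q Δ →
      ¬ (q ^ (2 * m) - 1) ∣ (i * q ^ u + i') := by
    intro u i i' hu hi hi'
    obtain ⟨h1, h2, -⟩ := mem_I0.mp hi
    obtain ⟨h3, h4, -⟩ := mem_I0.mp hi'
    exact hNT0 u i i' hu h1 h2 h3 h4
  set r : ℕ := Δ - Δ / q ^ 2 with hrdef
  have hrΔ : r ≤ Δ := Nat.sub_le _ _
  have hsize : 2 * (m * r) ≤ q ^ (2 * m) - 1 := by
    rcases Nat.even_or_odd m with hme | hmo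
    · have hm4 : 4 ≤ m := by
        obtain ⟨s, hs⟩ := hme
        omega
      have hA : q ^ 2 ≤ q ^ (m + 1) := Nat.pow_le_pow_right (by omega) (by omega)
      have hq4 : 4 ≤ q ^ 2 := by nlinarith
      have he1 : e = 1 := by rw [hedef, if_pos hme]
      have hΔle : Δ ≤ q ^ (m + 1) - q ^ 2 := by
        rw [he1] at hδ2
        simp only [mul_one] at hδ2
        omega
      exact size_bound_even q m r hq2 hm4 (by omega)
    · have he0 : e = 0 := by
        rw [hedef, if_neg (Nat.not_even_iff_odd.mpr hmo)]
      have hΔle : Δ ≤ q ^ m - 2 := by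
        rw [he0] at hδ2
        simp only [mul_zero, Nat.sub_zero, add_zero] at hδ2
        omega
      exact size_bound_odd q m r hq2 hm1 (by omega)
  -- the big code B and its Hermitian dual
  set B := codeB (F := F) q m Δ α with hBdef
  have hBfr : q ^ (2 * m) - 1 - m * r ≤ Module.finrank F B :=
    finrank_codeB_ge q m Δ α hq2 hfrE
  have hBN : Module.finrank F B ≤ q ^ (2 * m) - 1 := finrank_le_pi B
  have hBdual : hermDual φF B ≤ B :=
    hermDual_le_codeB q m Δ α φE hφE φF hφF hq2 hm1 hF hcardE hαord hNT
  set D0 := hermDual φF B with hD0def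
  have hD0fr : Module.finrank F D0 = (q ^ (2 * m) - 1) - Module.finrank F B :=
    finrank_hermDual φF B
  have hD0le : Module.finrank F D0 ≤ m * r := by omega
  have hD0so : D0 ≤ hermDual φF D0 := hermDual_antitone φF hBdual
  obtain ⟨D, hD0D, hDso, hDfr⟩ := witt_extend φF hφF2 hF hq2 hφF (m * r) hsize
    (m * r - Module.finrank F D0) D0 hD0so (by omega)
  refine ⟨hermDual φF D, ?_, ?_, ?_⟩
  · rw [finrank_hermDual φF D, hDfr]
  · -- minimum distance
    intro c hc hc0
    have hCB : hermDual φF D ≤ B := by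
      have h1 : hermDual φF D ≤ hermDual φF D0 := hermDual_antitone φF hD0D
      have h2 : hermDual φF D0 = B := by
        rw [hD0def]
        exact hermDual_hermDual φF hφF2 B
      rw [h2] at h1
      exact h1
    have hdist := dist_codeB q m Δ α φE hφE hq2 hm1 hF hαord (hCB hc) hc0
    omega
  · -- dual containment
    intro y hy
    have hyC : y ∈ hermDual φF (hermDual φF D) := by
      rw [mem_hermDual]
      intro x hx
      calc ∑ j, φF (y j) * x j = ∑ j, (y j) ^ q * x j :=
            Finset.sum_congr rfl fun j _ => by rw [hφF]
        _ = 0 := hy x hx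
    rw [hermDual_hermDual φF hφF2 D] at hyC
    exact hDso hyC
end

section
/- Let q be a prime power, m ≥ 2 an integer, n = q^m − 1, and set s = q^{⌈m/2⌉} − 1 − (q−2)·[m is odd]. Let Z = C_1 ∪ C_2 ∪ ⋯ ∪ C_s be the union of the q-ary cyclotomic cosets modulo n of 1, …, s. Then Z ∩ Z^{−1} ≠ ∅, where Z^{−1} = {(−z) mod n : z ∈ Z}. -/
/-!
Write `A = q ^ t` with `t = ⌊m/2⌋`. For `m = 2t` we have `n = A² - 1` and `s = A - 1`, and
`s · A = n - s`, so `-s ∈ C_s` while `s ∈ C_s`. For `m = 2t + 1` we have `n = qA² - 1` and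
`s = qA - q + 1`, and `s · A = n - w` with `w = (q - 1)A - 1 ∈ [1, s]`, so `-w ∈ C_s` while
`w ∈ C_w`.
-/

/-- The `q`-ary cyclotomic coset of `x` modulo `n`: `{x q^k mod n : k ≥ 0}`. -/
def cycCoset (q n x : ℕ) : Set ℕ := {y | ∃ k : ℕ, y = x * q ^ k % n}

lemma self_mem_cycCoset {q n x : ℕ} (hx : x < n) : x ∈ cycCoset q n x :=
  ⟨0, by rw [pow_zero, mul_one, Nat.mod_eq_of_lt hx]⟩

lemma union_cycCosets_meets_neg_of_mul_pow_add_eq {q n s x w k : ℕ} (hq : 0 < q)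
    (hx : x ∈ Set.Icc 1 s) (hw : w ∈ Set.Icc 1 s) (hn : x * q ^ k + w = n) :
    ((⋃ x ∈ Set.Icc 1 s, cycCoset q n x) ∩
      ((fun z => (n - z) % n) '' (⋃ x ∈ Set.Icc 1 s, cycCoset q n x))).Nonempty := by
  subst hn
  have hpos : 0 < x * q ^ k := Nat.mul_pos hx.1 (Nat.pow_pos hq)
  have hw1 : 1 ≤ w := hw.1
  refine ⟨w, Set.mem_biUnion hw (self_mem_cycCoset (by omega)), x * q ^ k,
    Set.mem_biUnion hx ⟨k, (Nat.mod_eq_of_lt (by omega)).symm⟩, ?_⟩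
  simp only [Nat.add_sub_cancel_left]
  exact Nat.mod_eq_of_lt (by omega)

lemma sub_one_mul_add_sub_one {A : ℕ} (hA : 1 ≤ A) : (A - 1) * A + (A - 1) = A * A - 1 := by
  have hAA : 1 ≤ A * A := Nat.one_le_iff_ne_zero.mpr (by positivity)
  zify [hA, hAA]
  ring

lemma mul_sub_add_one_mul_add_mul_sub_sub_one {q A : ℕ} (hq : 2 ≤ q) (hqA : q ≤ A) :
    (q * A - q + 1) * A + (q * A - A - 1) = q * A * A - 1 := by
  have hq_le : q ≤ q * A := Nat.le_mul_of_pos_right q (by omega)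
  have hA_lt : A + 1 ≤ q * A := by nlinarith
  have hqAA : 1 ≤ q * A * A := by nlinarith
  zify [hq_le, hA_lt, hqAA, (by omega : A ≤ q * A), (by omega : 1 ≤ q * A - A)]
  ring

/-- For `n = q^m - 1`, `m ≥ 2`, and `s = q^⌈m/2⌉ - 1 - (q-2)·[m odd]`, the
union `Z = C_1 ∪ ⋯ ∪ C_s` of `q`-ary cyclotomic cosets satisfies
`Z ∩ Z⁻¹ ≠ ∅`, where `Z⁻¹ = {-z mod n : z ∈ Z}`. -/
theorem union_cycCosets_meets_neg
    (q m : ℕ) (hq : IsPrimePow q) (hm : 2 ≤ m) :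
    (⋃ x ∈ Set.Icc 1 (q ^ ((m + 1) / 2) - 1 - (q - 2) * (if Odd m then 1 else 0)),
        cycCoset q (q ^ m - 1) x) ∩
      ((fun z => (q ^ m - 1 - z) % (q ^ m - 1)) ''
        (⋃ x ∈ Set.Icc 1 (q ^ ((m + 1) / 2) - 1 - (q - 2) * (if Odd m then 1 else 0)),
          cycCoset q (q ^ m - 1) x)) ≠ ∅ := by
  have hq2 : 2 ≤ q := hq.two_le
  refine Set.nonempty_iff_ne_empty.mp ?_
  obtain ⟨t, rfl | rfl⟩ := Nat.even_or_odd' m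
  · have hA : 2 ≤ q ^ t := hq2.trans (Nat.le_self_pow (by omega) q)
    have hs : q ^ ((2 * t + 1) / 2) - 1 - (q - 2) * (if Odd (2 * t) then 1 else 0)
        = q ^ t - 1 := by
      rw [if_neg (Nat.not_odd_iff_even.mpr (even_two_mul t)), (by omega : (2 * t + 1) / 2 = t)]
      omega
    rw [hs, pow_mul', sq]
    exact union_cycCosets_meets_neg_of_mul_pow_add_eq (by omega) ⟨by omega, le_rfl⟩
      ⟨by omega, le_rfl⟩ (sub_one_mul_add_sub_one (by omega))
  · have hqA : q ≤ q ^ t := Nat.le_self_pow (by omega) q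
    have hq_le : q ≤ q * q ^ t := Nat.le_mul_of_pos_right q (by positivity)
    have hs : q ^ ((2 * t + 1 + 1) / 2) - 1 - (q - 2) * (if Odd (2 * t + 1) then 1 else 0)
        = q * q ^ t - q + 1 := by
      rw [if_pos (odd_two_mul_add_one t), (by omega : (2 * t + 1 + 1) / 2 = t + 1), pow_succ']
      omega
    have hn : q ^ (2 * t + 1) = q * q ^ t * q ^ t := by ring
    have hw : q * q ^ t - q ^ t - 1 ∈ Set.Icc 1 (q * q ^ t - q + 1) := by
      have := Nat.mul_le_mul_right (q ^ t) hq2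
      constructor <;> omega
    rw [hs, hn]
    exact union_cycCosets_meets_neg_of_mul_pow_add_eq (by omega) ⟨by omega, le_rfl⟩ hw
      (mul_sub_add_one_mul_add_mul_sub_sub_one hq2 hqA)
end

section
/- Let q be a prime power, m a positive integer with m ≠ 2, n = q^{2m} − 1, and set s = q^{m + [m is even]} − 1 − (q^2 − 2)·[m is even]. Let Z = C_1 ∪ C_2 ∪ ⋯ ∪ C_s be the union of the q^2-ary cyclotomic cosets modulo n of 1, …, s. Then Z ∩ Z^{−q} ≠ ∅, where Z^{−q} = {(−qz) mod n : z ∈ Z}. -/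
def cosetUnion (Q n s : ℕ) : Set ℕ := ⋃ x ∈ Set.Icc 1 s, cycCoset Q n x

def negMulMod (q n z : ℕ) : ℕ := (n - q * z % n) % n

theorem sub_mod_mod_eq_of_dvd_add {n a b : ℕ} (hn : 0 < n) (h : n ∣ a + b) :
    (n - a % n) % n = b % n := by
  refine Nat.ModEq.add_right_cancel' (a % n) ?_
  rw [Nat.sub_add_cancel (Nat.mod_lt a hn).le]
  calc n ≡ 0 [MOD n] := Nat.modEq_zero_iff_dvd.mpr dvd_rfl
    _ ≡ b + a [MOD n] := (Nat.modEq_zero_iff_dvd.mpr (by rwa [add_comm])).symm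
    _ ≡ b + a % n [MOD n] := (Nat.mod_modEq a n).symm.add_left b

theorem cosetUnion_inter_negMulMod_ne_empty {Q q n s x y k : ℕ} (hx : x ∈ Set.Icc 1 s)
    (hy : y ∈ Set.Icc 1 s) (hyn : y < n) (hdvd : n ∣ q * y + x * Q ^ k) :
    cosetUnion Q n s ∩ negMulMod q n '' cosetUnion Q n s ≠ ∅ := by
  have hyy : y ∈ cycCoset Q n y := ⟨0, by simp [Nat.mod_eq_of_lt hyn]⟩
  refine Set.nonempty_iff_ne_empty.mp
    ⟨x * Q ^ k % n, Set.mem_biUnion hx ⟨k, rfl⟩, y, Set.mem_biUnion hy hyy, ?_⟩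
  exact sub_mod_mod_eq_of_dvd_add (by omega) hdvd

theorem cosetUnion_inter_negMulMod_ne_empty_of_eq_mul {Q q A k : ℕ} (hA : 2 ≤ A)
    (hk : Q ^ k = q * A) :
    cosetUnion Q (A ^ 2 - 1) (A - 1) ∩
      negMulMod q (A ^ 2 - 1) '' cosetUnion Q (A ^ 2 - 1) (A - 1) ≠ ∅ := by
  have hA2 : 2 * A ≤ A ^ 2 := by nlinarith
  refine cosetUnion_inter_negMulMod_ne_empty (x := A - 1) (y := A - 1) (k := k)
    ⟨by omega, le_rfl⟩ ⟨by omega, le_rfl⟩ (by omega) ⟨q, ?_⟩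
  rw [hk]
  zify [(by omega : 1 ≤ A), (by omega : 1 ≤ A ^ 2)]
  ring

theorem cosetUnion_inter_negMulMod_ne_empty_of_eq_cube_mul {Q q B k : ℕ} (hq : 2 ≤ q)
    (hB : q ^ 2 ≤ B) (hk : Q ^ k = q ^ 3 * B) :
    cosetUnion Q (q ^ 2 * B ^ 2 - 1) (q ^ 2 * B - 1 - (q ^ 2 - 2)) ∩
      negMulMod q (q ^ 2 * B ^ 2 - 1) ''
        cosetUnion Q (q ^ 2 * B ^ 2 - 1) (q ^ 2 * B - 1 - (q ^ 2 - 2)) ≠ ∅ := by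
  have h4 : 4 ≤ q ^ 2 := by nlinarith
  have hq3 : q ≤ q ^ 3 := Nat.le_self_pow (by norm_num) q
  have hqB : 4 * B ≤ q ^ 2 * B := Nat.mul_le_mul_right B h4
  have hqB' : q ^ 2 * 2 ≤ q ^ 2 * B := Nat.mul_le_mul_left _ (by omega)
  have hBB : q ^ 2 * B * 2 ≤ q ^ 2 * B ^ 2 := by
    rw [sq B, ← mul_assoc]; exact Nat.mul_le_mul_left _ (by omega)
  refine cosetUnion_inter_negMulMod_ne_empty (x := q ^ 2 * B - B - 1)
    (y := q ^ 2 * B - 1 - (q ^ 2 - 2)) (k := k)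
    ⟨by omega, by omega⟩ ⟨by omega, le_rfl⟩ (by omega) ⟨q ^ 3 - q, ?_⟩
  rw [hk]
  zify [hq3, (by omega : 1 ≤ q ^ 2 * B ^ 2), (by omega : 2 ≤ q ^ 2),
    (by omega : 1 ≤ q ^ 2 * B), (by omega : q ^ 2 - 2 ≤ q ^ 2 * B - 1),
    (by omega : B ≤ q ^ 2 * B), (by omega : 1 ≤ q ^ 2 * B - B)]
  ring

/-- For `n = q^{2m} - 1`, `m ≠ 2`, and
`s = q^{m + [m even]} - 1 - (q^2-2)·[m even]`, the union `Z = C_1 ∪ ⋯ ∪ C_s`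
of `q^2`-ary cyclotomic cosets satisfies `Z ∩ Z^{-q} ≠ ∅`, where
`Z^{-q} = {-qz mod n : z ∈ Z}`. -/
theorem union_cycCosets_meets_negq
    (q m : ℕ) (hq : IsPrimePow q) (hm : 0 < m) (hm2 : m ≠ 2) :
    (⋃ x ∈ Set.Icc 1 (q ^ (m + (if Even m then 1 else 0)) - 1 -
        (q ^ 2 - 2) * (if Even m then 1 else 0)),
        cycCoset (q ^ 2) (q ^ (2 * m) - 1) x) ∩
      ((fun z => (q ^ (2 * m) - 1 - (q * z) % (q ^ (2 * m) - 1)) % (q ^ (2 * m) - 1)) ''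
        (⋃ x ∈ Set.Icc 1 (q ^ (m + (if Even m then 1 else 0)) - 1 -
          (q ^ 2 - 2) * (if Even m then 1 else 0)),
          cycCoset (q ^ 2) (q ^ (2 * m) - 1) x)) ≠ ∅ := by
  have hq2 : 2 ≤ q := hq.two_le
  rcases Nat.even_or_odd m with hme | ⟨t, rfl⟩
  · simp only [if_pos hme, mul_one]
    obtain ⟨t, ht⟩ := hme
    have hB : q ^ 2 ≤ q ^ (m - 1) := Nat.pow_le_pow_right (by omega) (by omega)
    have hs : q ^ (m + 1) = q ^ 2 * q ^ (m - 1) := by rw [← pow_add]; congr 1; omega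
    have hn : q ^ (2 * m) = q ^ 2 * (q ^ (m - 1)) ^ 2 := by
      rw [← pow_mul, ← pow_add]; congr 1; omega
    have hk : (q ^ 2) ^ (t + 1) = q ^ 3 * q ^ (m - 1) := by
      rw [← pow_mul, ← pow_add]; congr 1; omega
    rw [hs, hn]
    exact cosetUnion_inter_negMulMod_ne_empty_of_eq_cube_mul hq2 hB hk
  · have hA : 2 ≤ q ^ (2 * t + 1) := le_trans hq2 (Nat.le_self_pow (by omega) q)
    simp only [Nat.not_even_two_mul_add_one, if_false, mul_zero, add_zero, Nat.sub_zero]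
    rw [show q ^ (2 * (2 * t + 1)) = (q ^ (2 * t + 1)) ^ 2 by ring]
    exact cosetUnion_inter_negMulMod_ne_empty_of_eq_mul (k := t + 1) hA (by ring)
end

section
/- Let q be a prime power, m ≥ 2 an integer, n = q^m − 1, and δ_max = q^{⌈m/2⌉} − 1 − (q−2)·[m is odd]. Let δ be an integer with 2 ≤ δ ≤ δ_max, let Z_δ = C_1 ∪ ⋯ ∪ C_{δ−1} be the union of the q-ary cyclotomic cosets modulo n of 1, …, δ−1, and let T_δ = {(−z) mod n : z ∈ {0,1,…,n−1} \ Z_δ}. Then T_δ contains {0, 1, 2, …, δ_max − 1}, i.e. T_δ contains at least δ_max consecutive residues modulo n starting at 0. -/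
def deltaMax (q m : ℕ) : ℕ := q ^ ((m + 1) / 2) - 1 - (q - 2) * (if Odd m then 1 else 0)

theorem deltaMax_two_mul (q t : ℕ) : deltaMax q (2 * t) = q ^ t - 1 := by
  simp [deltaMax, show (2 * t + 1) / 2 = t by omega, Nat.not_odd_iff_even.2 (even_two_mul t)]

theorem deltaMax_two_mul_add_one (q t : ℕ) :
    deltaMax q (2 * t + 1) = q ^ (t + 1) - 1 - (q - 2) := by
  simp [deltaMax, show (2 * t + 1 + 1) / 2 = t + 1 by omega]

section Rotation

variable {q : ℕ}

theorem pow_modEq_one_mod_pow_sub_one (hq : 0 < q) (m : ℕ) : q ^ m ≡ 1 [MOD q ^ m - 1] :=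
  Nat.modEq_sub (Nat.one_le_pow _ _ hq)

theorem mul_pow_mod_pow_sub_one_eq_mod (hq : 0 < q) (x k m : ℕ) :
    x * q ^ k % (q ^ m - 1) = x * q ^ (k % m) % (q ^ m - 1) :=
  calc x * q ^ k = x * ((q ^ m) ^ (k / m) * q ^ (k % m)) := by
        rw [← pow_mul, ← pow_add, Nat.div_add_mod]
    _ ≡ x * (1 ^ (k / m) * q ^ (k % m)) [MOD q ^ m - 1] :=
        (((pow_modEq_one_mod_pow_sub_one hq m).pow _).mul_right _).mul_left _
    _ = x * q ^ (k % m) := by rw [one_pow, one_mul]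

/-- The right-hand side is `x` with its base-`q` digits rotated: the low `s` digits move up by
`k` places and the rest wrap around to the bottom. -/
theorem mul_pow_mod_pow_sub_one_le (hq : 0 < q) {k s m : ℕ} (h : k + s = m) (x : ℕ) :
    x * q ^ k % (q ^ m - 1) ≤ x % q ^ s * q ^ k + x / q ^ s := by
  have hrot : x * q ^ k ≡ x % q ^ s * q ^ k + x / q ^ s [MOD q ^ m - 1] :=
    calc x * q ^ k = x % q ^ s * q ^ k + x / q ^ s * q ^ m := by
          rw [← h, pow_add]
          conv_lhs => rw [← Nat.mod_add_div x (q ^ s)]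
          ring
      _ ≡ x % q ^ s * q ^ k + x / q ^ s * 1 [MOD q ^ m - 1] :=
          ((pow_modEq_one_mod_pow_sub_one hq m).mul_left _).add_left _
      _ = x % q ^ s * q ^ k + x / q ^ s := by rw [mul_one]
  rw [hrot]
  exact Nat.mod_le _ _

theorem mul_pow_mod_pow_sub_one_add_le (hq : 0 < q) {k s m c x : ℕ} (h : k + s = m)
    (hx : x + c ≤ q ^ k) : x * q ^ k % (q ^ m - 1) + c ≤ q ^ m := by
  have hrot := mul_pow_mod_pow_sub_one_le hq h x
  have hdiv : x / q ^ s ≤ x := Nat.div_le_self _ _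
  have hmod : (x % q ^ s + 1) * q ^ k ≤ q ^ m := by
    rw [← h, pow_add, mul_comm (q ^ k)]
    exact Nat.mul_le_mul_right _ (Nat.mod_lt _ (pow_pos hq s))
  nlinarith

theorem mul_pow_mod_pow_sub_one_ne_zero {m x : ℕ} (hm : 0 < m) (hx : 0 < x)
    (hxn : x < q ^ m - 1) (k : ℕ) : x * q ^ k % (q ^ m - 1) ≠ 0 := by
  have hcop : (q ^ m - 1).Coprime q := by
    have hunit : (q ^ m - 1).Coprime (q ^ m - 1 + 1) := by
      rw [Nat.coprime_self_add_right]
      exact Nat.coprime_one_right _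
    rw [Nat.sub_add_cancel (by omega)] at hunit
    exact hunit.coprime_dvd_right (dvd_pow_self q hm.ne')
  intro h0
  have hdvd := (hcop.pow_right k).dvd_of_dvd_mul_right (Nat.dvd_of_mod_eq_zero h0)
  exact absurd (Nat.le_of_dvd hx hdvd) (by omega)

-- The bound `x * q ^ k % n ≤ n - δ_max` for `m = 2t`, `δ_max = q ^ t - 1`, without subtraction.
theorem mul_pow_mod_add_le_of_even (hq : 2 ≤ q) {t x : ℕ} (hx : x + 2 ≤ q ^ t) (k : ℕ) :
    x * q ^ k % (q ^ (2 * t) - 1) + q ^ t ≤ q ^ (2 * t) := by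
  have ht : 0 < t := Nat.pos_of_ne_zero (by rintro rfl; simp at hx)
  rw [mul_pow_mod_pow_sub_one_eq_mod (by omega)]
  have hk : k % (2 * t) < 2 * t := Nat.mod_lt _ (by omega)
  generalize k % (2 * t) = k at hk
  have hsq : q ^ (2 * t) = q ^ t * q ^ t := by rw [two_mul, pow_add]
  rcases le_or_gt k t with hkt | hkt
  · have hy : x * q ^ k % (q ^ (2 * t) - 1) ≤ x * q ^ t :=
      (Nat.mod_le _ _).trans (Nat.mul_le_mul_left _ (Nat.pow_le_pow_right (by omega) hkt))
    nlinarith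
  · refine mul_pow_mod_pow_sub_one_add_le (by omega) (Nat.add_sub_cancel' hk.le) ?_
    calc x + q ^ t ≤ q ^ t * q := by nlinarith
      _ ≤ q ^ k := by rw [← pow_succ]; exact Nat.pow_le_pow_right (by omega) hkt

-- The rotation by `t + 1` places in the odd case, the one where the bound is attained.
theorem mul_pow_succ_mod_add_le (hq : 2 ≤ q) {t x : ℕ} (hx : x + q ≤ q ^ (t + 1)) :
    x * q ^ (t + 1) % (q ^ (2 * t + 1) - 1) + q ^ (t + 1) + 2 ≤ q ^ (2 * t + 1) + q := by
  have hrot := mul_pow_mod_pow_sub_one_le (q := q) (by omega) (by ring : t + 1 + t = 2 * t + 1) x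
  have hP : 0 < q ^ t := pow_pos (by omega) t
  have hQ : q ^ (t + 1) = q * q ^ t := pow_succ' q t
  have hm : q ^ (2 * t + 1) = q * q ^ t * q ^ t := by rw [← hQ, ← pow_add]; ring_nf
  have hx' := Nat.mod_add_div x (q ^ t)
  have hr : x % q ^ t < q ^ t := Nat.mod_lt _ hP
  have hu : x / q ^ t < q := (Nat.div_lt_iff_lt_mul hP).2 (by nlinarith)
  simp only [hQ, hm] at hrot hx ⊢
  generalize x * (q * q ^ t) % (q * q ^ t * q ^ t - 1) = y at hrot ⊢
  generalize x % q ^ t = r at *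
  generalize x / q ^ t = u at *
  generalize q ^ t = P at *
  rcases Nat.lt_or_ge (r + 1) P with hr2 | hr1
  · nlinarith
  · have hu1 : u + 1 < q := by
      by_contra! h
      nlinarith
    have hrP : r + 1 = P := by omega
    subst hrP
    nlinarith

-- The bound `x * q ^ k % n ≤ n - δ_max` for `m = 2t + 1`, `δ_max = q ^ (t + 1) - q + 1`,
-- without subtraction.
theorem mul_pow_mod_add_le_of_odd (hq : 2 ≤ q) {t x : ℕ} (hx : x + q ≤ q ^ (t + 1)) (k : ℕ) :
    x * q ^ k % (q ^ (2 * t + 1) - 1) + q ^ (t + 1) + 2 ≤ q ^ (2 * t + 1) + q := by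
  rw [mul_pow_mod_pow_sub_one_eq_mod (by omega)]
  have hk : k % (2 * t + 1) < 2 * t + 1 := Nat.mod_lt _ (by omega)
  generalize k % (2 * t + 1) = k at hk
  rcases lt_trichotomy k (t + 1) with hkt | rfl | hkt
  · have hy : x * q ^ k % (q ^ (2 * t + 1) - 1) ≤ x * q ^ t :=
      (Nat.mod_le _ _).trans (Nat.mul_le_mul_left _ (Nat.pow_le_pow_right (by omega) (by omega)))
    have hm : q ^ (2 * t + 1) = q ^ (t + 1) * q ^ t := by rw [← pow_add]; ring_nf
    have hQ : q ^ (t + 1) = q * q ^ t := pow_succ' q t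
    have hxt := Nat.mul_le_mul_right (q ^ t) hx
    nlinarith
  · exact mul_pow_succ_mod_add_le hq hx
  · have hy := mul_pow_mod_pow_sub_one_add_le (c := q ^ (t + 1)) (by omega)
      (Nat.add_sub_cancel' hk.le) <| calc
        x + q ^ (t + 1) ≤ q ^ (t + 1) * q := by nlinarith
        _ ≤ q ^ k := by rw [← pow_succ]; exact Nat.pow_le_pow_right (by omega) hkt
    omega

theorem mul_pow_mod_add_deltaMax_le (hq : 2 ≤ q) {m x : ℕ} (hx : x < deltaMax q m) (k : ℕ) :
    x * q ^ k % (q ^ m - 1) + deltaMax q m ≤ q ^ m - 1 := by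
  obtain ⟨t, rfl | rfl⟩ := Nat.even_or_odd' m
  · rw [deltaMax_two_mul] at hx ⊢
    have := mul_pow_mod_add_le_of_even hq (by omega : x + 2 ≤ q ^ t) k
    omega
  · rw [deltaMax_two_mul_add_one] at hx ⊢
    have hqt : q ≤ q ^ (t + 1) := Nat.le_self_pow (by omega) q
    have := mul_pow_mod_add_le_of_odd hq (by omega : x + q ≤ q ^ (t + 1)) k
    omega

end Rotation

theorem Iio_subset_image_sub_mod_diff {n D : ℕ} {Z : Set ℕ} (hD : D ≤ n)
    (hZ : ∀ z ∈ Z, 0 < z ∧ z + D ≤ n) :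
    Set.Iio D ⊆ (fun z => (n - z) % n) '' (Set.Iio n \ Z) := by
  intro i hi
  rw [Set.mem_Iio] at hi
  rcases Nat.eq_zero_or_pos i with rfl | hi0
  · exact ⟨0, ⟨Set.mem_Iio.2 (by omega), fun h => (hZ 0 h).1.false⟩, by simp⟩
  · refine ⟨n - i, ⟨Set.mem_Iio.2 (by omega), fun h => by have := hZ _ h; omega⟩, ?_⟩
    change (n - (n - i)) % n = i
    rw [Nat.sub_sub_self (by omega), Nat.mod_eq_of_lt (by omega)]

theorem dual_defining_set_contains_consecutive_general
    (q m : ℕ) (hq : IsPrimePow q) (hm : 2 ≤ m)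
    (δ : ℕ)
    (hδ2 : δ ≤ q ^ ((m + 1) / 2) - 1 - (q - 2) * (if Odd m then 1 else 0)) :
    Set.Iio (q ^ ((m + 1) / 2) - 1 - (q - 2) * (if Odd m then 1 else 0)) ⊆
      (fun z => (q ^ m - 1 - z) % (q ^ m - 1)) ''
        (Set.Iio (q ^ m - 1) \
          ⋃ x ∈ Set.Icc 1 (δ - 1), cycCoset q (q ^ m - 1) x) := by
  change δ ≤ deltaMax q m at hδ2
  have hq2 : 2 ≤ q := hq.two_le
  have hD : deltaMax q m ≤ q ^ m - 1 :=
    (Nat.sub_le _ _).trans (Nat.sub_le_sub_right (Nat.pow_le_pow_right (by omega) (by omega)) 1)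
  refine Iio_subset_image_sub_mod_diff hD ?_
  simp only [Set.mem_iUnion, Set.mem_Icc, cycCoset]
  rintro _ ⟨x, ⟨hx1, hxδ⟩, k, rfl⟩
  have hx : x < deltaMax q m := by omega
  exact ⟨Nat.pos_of_ne_zero (mul_pow_mod_pow_sub_one_ne_zero (by omega) hx1 (by omega) k),
    mul_pow_mod_add_deltaMax_le hq2 hx k⟩

/-- For `n = q^m - 1`, `m ≥ 2`, `δ_max = q^⌈m/2⌉ - 1 - (q-2)·[m odd]` and
`2 ≤ δ ≤ δ_max`: the defining set
`T_δ = {-z mod n : z ∈ {0,…,n-1} \ Z_δ}` of the dual code, where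
`Z_δ = C_1 ∪ ⋯ ∪ C_{δ-1}`, contains `{0, 1, …, δ_max - 1}`. -/
theorem dual_defining_set_contains_consecutive
    (q m : ℕ) (hq : IsPrimePow q) (hm : 2 ≤ m)
    (δ : ℕ) (hδ1 : 2 ≤ δ)
    (hδ2 : δ ≤ q ^ ((m + 1) / 2) - 1 - (q - 2) * (if Odd m then 1 else 0)) :
    Set.Iio (q ^ ((m + 1) / 2) - 1 - (q - 2) * (if Odd m then 1 else 0)) ⊆
      (fun z => (q ^ m - 1 - z) % (q ^ m - 1)) ''
        (Set.Iio (q ^ m - 1) \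
          ⋃ x ∈ Set.Icc 1 (δ - 1), cycCoset q (q ^ m - 1) x) :=
  dual_defining_set_contains_consecutive_general q m hq hm δ hδ2
end
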